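/- A normal extension (S,θ) is isomorphic, as a normal extension, to a full restricted semidirect product if and only if θ is a split almost Billhardt congruence on S. That is: there exist inverse semigroups K and T, an action of T on K by endomorphisms satisfying (AFR), and an isomorphism φ: S → K⋊T with φ(Ker θ) = Ker(ker π₂) and s θ s' ⇔ φ(s) (ker π₂) φ(s'), if and only if there exists a homomorphism ξ: S/θ → Ω(S,θ) which is an almost Billhardt transversal to θ. -/

import Mathlib

/-- An inverse semigroup: a semigroup in which every element `a` has a unique
inverse `a⁻¹` satisfying `a * a⁻¹ * a = a` and `a⁻¹ * a * a⁻¹ = a⁻¹`. -/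
class InverseSemigroup (S : Type*) extends Semigroup S, Inv S where
  mul_inv_mul : ∀ a : S, a * a⁻¹ * a = a
  inv_mul_inv : ∀ a : S, a⁻¹ * a * a⁻¹ = a⁻¹
  inv_unique : ∀ {a b : S}, a * b * a = a → b * a * b = b → b = a⁻¹

/-- The set of idempotents `E(T)` of a `Mul`-structure. -/
def idemSet (T : Type*) [Mul T] : Set T := {e | e * e = e}

/-- `ran t = t * t⁻¹`. -/
def iran {T : Type*} [Mul T] [Inv T] (t : T) : T := t * t⁻¹

/-- `dom t = t⁻¹ * t`. -/
def idom {T : Type*} [Mul T] [Inv T] (t : T) : T := t⁻¹ * t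

/-- The natural partial order: `a ≤ b` iff `a = e * b` for some idempotent `e`. -/
def nle {T : Type*} [Mul T] (a b : T) : Prop := ∃ e ∈ idemSet T, a = e * b

/-- `b` is an inverse of `a`. -/
def IsInvPair {T : Type*} [Mul T] (a b : T) : Prop := a * b * a = a ∧ b * a * b = b

/-- An action of `T` on `K` by endomorphisms. -/
def IsAction {K T : Type*} [Mul K] [Mul T] (act : T → K → K) : Prop :=
  (∀ t a b, act t (a * b) = act t a * act t b) ∧
  (∀ t u a, act (t * u) a = act t (act u a))

/-- `ε : K → T` is a (surjective) homomorphism from `K` onto the semilattice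
of idempotents `E(T)` of `T`. -/
def IsSurjHomOntoE {K T : Type*} [Mul K] [Mul T] (ε : K → T) : Prop :=
  (∀ a b, ε (a * b) = ε a * ε b) ∧ (∀ a, ε a ∈ idemSet T) ∧
  (∀ e ∈ idemSet T, ∃ a, ε a = e)

/-- Condition (AFR): `e · a = a` iff `ε a ≤ e`, for all `a ∈ K`, `e ∈ E(T)`. -/
def AFR {K T : Type*} [Mul K] [Mul T] (act : T → K → K) (ε : K → T) : Prop :=
  ∀ (a : K), ∀ e ∈ idemSet T, (act e a = a ↔ nle (ε a) e)

/-- The carrier of the λ-semidirect product `K ⋊^λ T`: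
`{(a,t) ∈ K × T : a = ran(t) · a}`. -/
def lsdSet {K T : Type*} [Mul K] [Mul T] [Inv T] (act : T → K → K) :
    Set (K × T) := {p | act (iran p.2) p.1 = p.1}

/-- The multiplication of the λ-semidirect product:
`(a,t)(b,u) = ((ran(tu) · a)(t · b), tu)`. -/
def lsdMul {K T : Type*} [Mul K] [Mul T] [Inv T] (act : T → K → K)
    (p q : K × T) : K × T :=
  (act (iran (p.2 * q.2)) p.1 * act p.2 q.1, p.2 * q.2)

/-- The carrier of the full restricted semidirect product `K ⋊ T`:
`{(a,t) ∈ K × T : ε a = ran t}`. -/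
def rsdSet {K T : Type*} [Mul T] [Inv T] (ε : K → T) : Set (K × T) :=
  {p | ε p.1 = iran p.2}

/-- The multiplication of the full restricted semidirect product:
`(a,t)(b,u) = (a (t · b), tu)`. -/
def rsdMul {K T : Type*} [Mul K] [Mul T] (act : T → K → K)
    (p q : K × T) : K × T :=
  (p.1 * act p.2 q.1, p.2 * q.2)

/-- The Kernel of the congruence `ker π₂` (equality of second components) on a
subset `C` of a product, with multiplication `m`: all elements of `C` that are
`(ker π₂)`-related to an idempotent of `C`. -/
def pi2Kernel {X Y : Type*} (m : X × Y → X × Y → X × Y) (C : Set (X × Y)) :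
    Set (X × Y) :=
  {p | p ∈ C ∧ ∃ q ∈ C, m q q = q ∧ q.2 = p.2}

/-- A bitranslation of a semigroup `S`: a linked pair `(l, r)` of a left
translation and a right translation, written `ω s := l s`, `s ω := r s`. -/
@[ext]
structure Bitrans (S : Type*) [Mul S] where
  l : S → S
  r : S → S
  l_mul : ∀ s t : S, l (s * t) = l s * t
  r_mul : ∀ s t : S, r (s * t) = s * r t
  linked : ∀ s t : S, s * l t = r s * t

namespace Bitrans

variable {S : Type*} [Mul S]

/-- Product of bitranslations: `(ωω')s = ω(ω's)` and `s(ωω') = (sω)ω'`. -/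
instance : Mul (Bitrans S) where
  mul ω ω' :=
    { l := fun s => ω.l (ω'.l s)
      r := fun s => ω'.r (ω.r s)
      l_mul := fun s t => by
        show ω.l (ω'.l (s * t)) = ω.l (ω'.l s) * t
        rw [ω'.l_mul, ω.l_mul]
      r_mul := fun s t => by
        show ω'.r (ω.r (s * t)) = s * ω'.r (ω.r t)
        rw [ω.r_mul, ω'.r_mul]
      linked := fun s t => by
        show s * ω.l (ω'.l t) = ω'.r (ω.r s) * t
        rw [ω.linked, ω'.linked] }

/-- The translational hull `Ω(S)` (all bitranslations) is a semigroup. -/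
instance : Semigroup (Bitrans S) where
  mul_assoc a b c := by ext s <;> rfl

end Bitrans

/-- The inner bitranslation `π_s` induced by `s`. -/
def innerBitrans {S : Type*} [Semigroup S] (s : S) : Bitrans S where
  l := fun x => s * x
  r := fun x => x * s
  l_mul := fun x y => (mul_assoc s x y).symm
  r_mul := fun x y => mul_assoc x y s
  linked := fun x y => (mul_assoc x s y).symm

/-- `Π(S)`, the set of inner bitranslations of `S`. -/
def innerSet (S : Type*) [Semigroup S] : Set (Bitrans S) :=
  Set.range (innerBitrans (S := S))

/-- A bitranslation of `S` respects the congruence `θ`. -/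
def RespectsCon {S : Type*} [Mul S] (θ : Con S) (ω : Bitrans S) : Prop :=
  ∀ a b : S, θ a b → θ (ω.l a) (ω.l b) ∧ θ (ω.r a) (ω.r b)

/-- The bitranslation of `S/θ` induced by `ω` is the inner bitranslation
induced by some `u ∈ S/θ`. -/
def InducedInnerCon {S : Type*} [Mul S] (θ : Con S) (ω : Bitrans S) : Prop :=
  ∃ u : θ.Quotient, ∀ s : S,
    ((ω.l s : S) : θ.Quotient) = u * (s : θ.Quotient) ∧
    ((ω.r s : S) : θ.Quotient) = (s : θ.Quotient) * u

/-- The translational hull `Ω(S, θ)` of the normal extension `(S, θ)`: all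
bitranslations of `S` respecting `θ` whose induced bitranslation on `S/θ`
is inner. -/
def OmegaNE {S : Type*} [Mul S] (θ : Con S) : Set (Bitrans S) :=
  {ω | RespectsCon θ ω ∧ InducedInnerCon θ ω}

/-- The congruence `Ω(θ)` on `Ω(S, θ)`: `ω Ω(θ) ω'` iff `ωs θ ω's` and
`sω θ sω'` for every `s ∈ S`. -/
def OmegaCon {S : Type*} [Mul S] (θ : Con S) (ω ω' : Bitrans S) : Prop :=
  ∀ s : S, θ (ω.l s) (ω'.l s) ∧ θ (ω.r s) (ω'.r s)

/-- The natural partial order on the inverse semigroup `Ω(S, θ)`: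
`x ≤ y` iff `x = e * y` for some idempotent `e` of `Ω(S, θ)`. -/
def OmegaLe {S : Type*} [Mul S] (θ : Con S) (x y : Bitrans S) : Prop :=
  ∃ e ∈ OmegaNE θ, e * e = e ∧ x = e * y

/-- The generating set `Π(S) ∪ ξ(S/θ)` of the inverse subsemigroup `S̄`
(together with the inverses of the elements `ξ(t)`). -/
def SbarGen {S : Type*} [Semigroup S] (θ : Con S)
    (ξ : θ.Quotient → Bitrans S) : Set (Bitrans S) :=
  innerSet S ∪ Set.range ξ ∪ {ω | ∃ t : θ.Quotient, IsInvPair (ξ t) ω}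

/-- The inverse subsemigroup `S̄` of `Ω(S,θ)` generated by `Π(S) ∪ ξ(S/θ)`. -/
def Sbar {S : Type*} [Semigroup S] (θ : Con S)
    (ξ : θ.Quotient → Bitrans S) : Subsemigroup (Bitrans S) :=
  Subsemigroup.closure (SbarGen θ ξ)

/-- `ξ : S/θ → Ω(S,θ)` is an almost Billhardt transversal to `θ`:
(B1) `(ξ t)^↓` is the inner bitranslation of `S/θ` induced by `t`, and
(B2) `ξ(t)⁻¹ ξ(t) ≥ ω⁻¹ ω` for every `ω ∈ S̄ \ ξ(S/θ)` with
`ω^↓ = ω_t^{S/θ}`. -/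
def IsAlmostBillhardt {S : Type*} [Semigroup S] (θ : Con S)
    (ξ : θ.Quotient → Bitrans S) : Prop :=
  -- `ξ` maps into `Ω(S,θ)`
  (∀ t : θ.Quotient, RespectsCon θ (ξ t)) ∧
  -- (B1)
  (∀ (t : θ.Quotient) (s : S),
      (((ξ t).l s : S) : θ.Quotient) = t * (s : θ.Quotient) ∧
      (((ξ t).r s : S) : θ.Quotient) = (s : θ.Quotient) * t) ∧
  -- (B2)
  (∀ ω ∈ Sbar θ ξ, ω ∉ Set.range ξ →
      ∀ t : θ.Quotient,
        (∀ s : S, ((ω.l s : S) : θ.Quotient) = t * (s : θ.Quotient) ∧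
            ((ω.r s : S) : θ.Quotient) = (s : θ.Quotient) * t) →
        ∀ ξi ωi : Bitrans S, IsInvPair (ξ t) ξi → IsInvPair ω ωi →
          OmegaLe θ (ωi * ω) (ξi * ξ t))

/-- The Kernel of the congruence `θ`: all elements `θ`-related to an
idempotent. -/
def KerCon {S : Type*} [Mul S] (θ : Con S) : Set S :=
  {s | ∃ e : S, e * e = e ∧ θ s e}

/-! ### Auxiliary: basic inverse semigroup lemmas -/

section InvBasic
variable {M : Type*} [InverseSemigroup M]

lemma mim (a : M) : a * a⁻¹ * a = a := InverseSemigroup.mul_inv_mul a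
lemma imi (a : M) : a⁻¹ * a * a⁻¹ = a⁻¹ := InverseSemigroup.inv_mul_inv a
lemma invu {a b : M} (h1 : a * b * a = a) (h2 : b * a * b = b) : b = a⁻¹ :=
  InverseSemigroup.inv_unique h1 h2
lemma mim' (a : M) : a * (a⁻¹ * a) = a := by rw [← mul_assoc, mim]
lemma imi' (a : M) : a⁻¹ * (a * a⁻¹) = a⁻¹ := by rw [← mul_assoc, imi]
lemma inv_inv' (a : M) : a⁻¹⁻¹ = a := (invu (imi a) (mim a)).symm
lemma inv_idem' {e : M} (he : e * e = e) : e⁻¹ = e :=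
  (invu (by rw [he, he]) (by rw [he, he])).symm
lemma idem_dom (a : M) : (a⁻¹ * a) * (a⁻¹ * a) = a⁻¹ * a := by
  rw [mul_assoc a⁻¹, ← mul_assoc a, mim]
lemma idem_ran (a : M) : (a * a⁻¹) * (a * a⁻¹) = a * a⁻¹ := by
  rw [mul_assoc a, ← mul_assoc a⁻¹, imi]

lemma idem_mul {e f : M} (he : e * e = e) (hf : f * f = f) :
    (e * f) * (e * f) = e * f := by
  set x := (e * f)⁻¹ with hx
  have he' : ∀ y : M, e * (e * y) = e * y := fun y => by rw [← mul_assoc, he]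
  have hf' : ∀ y : M, f * (f * y) = f * y := fun y => by rw [← mul_assoc, hf]
  have hmim : e * (f * (x * (e * f))) = e * f := by
    have := mim (e * f); simpa [mul_assoc] using this
  have himi : x * (e * (f * x)) = x := by
    have := imi (e * f); simpa [mul_assoc] using this
  have h1 : (e * f) * (f * (x * e)) * (e * f) = e * f := by
    calc (e * f) * (f * (x * e)) * (e * f)
        = e * (f * (f * (x * (e * (e * f))))) := by simp only [mul_assoc]
      _ = e * (f * (x * (e * f))) := by rw [hf', he']
      _ = e * f := hmim
  have h2 : (f * (x * e)) * (e * f) * (f * (x * e)) = f * (x * e) := by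
    calc (f * (x * e)) * (e * f) * (f * (x * e))
        = f * (x * (e * (e * (f * (f * (x * e)))))) := by simp only [mul_assoc]
      _ = f * (x * (e * (f * (x * e)))) := by rw [he', hf']
      _ = f * ((x * (e * (f * x))) * e) := by simp only [mul_assoc]
      _ = f * (x * e) := by rw [himi]
  have hxe : f * (x * e) = x := invu h1 h2
  have hxx : x * x = x := by
    conv_lhs => rw [← hxe]
    calc (f * (x * e)) * (f * (x * e))
        = f * (x * (e * (f * (x * e)))) := by simp only [mul_assoc]
      _ = f * ((x * (e * (f * x))) * e) := by simp only [mul_assoc]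
      _ = f * (x * e) := by rw [himi]
      _ = x := hxe
  have hef : e * f = x := by
    have h1' : x * (e * f) * x = x := by simpa [mul_assoc] using himi
    have h2' : (e * f) * x * (e * f) = e * f := by simpa [mul_assoc] using hmim
    rw [invu h1' h2', inv_idem' hxx]
  rw [hef, hxx]

lemma idem_comm {e f : M} (he : e * e = e) (hf : f * f = f) :
    e * f = f * e := by
  have hef := idem_mul he hf
  have hfe := idem_mul hf he
  have he' : ∀ y : M, e * (e * y) = e * y := fun y => by rw [← mul_assoc, he]
  have hf' : ∀ y : M, f * (f * y) = f * y := fun y => by rw [← mul_assoc, hf]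
  have h1 : (e * f) * (f * e) * (e * f) = e * f := by
    calc (e * f) * (f * e) * (e * f)
        = e * (f * (f * (e * (e * f)))) := by simp only [mul_assoc]
      _ = e * (f * (e * f)) := by rw [hf', he']
      _ = (e * f) * (e * f) := by simp only [mul_assoc]
      _ = e * f := hef
  have h2 : (f * e) * (e * f) * (f * e) = f * e := by
    calc (f * e) * (e * f) * (f * e)
        = f * (e * (e * (f * (f * e)))) := by simp only [mul_assoc]
      _ = f * (e * (f * e)) := by rw [he', hf']
      _ = (f * e) * (f * e) := by simp only [mul_assoc]
      _ = f * e := hfe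
  rw [invu h1 h2, inv_idem' hef]

lemma mul_inv_rev' (a b : M) : (a * b)⁻¹ = b⁻¹ * a⁻¹ := by
  have hcomm1 := idem_comm (idem_ran b) (idem_dom a)
  have h1 : (a * b) * (b⁻¹ * a⁻¹) * (a * b) = a * b := by
    calc (a * b) * (b⁻¹ * a⁻¹) * (a * b)
        = a * ((b * b⁻¹) * (a⁻¹ * a)) * b := by simp only [mul_assoc]
      _ = a * ((a⁻¹ * a) * (b * b⁻¹)) * b := by rw [hcomm1]
      _ = (a * (a⁻¹ * a)) * ((b * b⁻¹) * b) := by simp only [mul_assoc]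
      _ = a * b := by rw [mim' a, mul_assoc, mim' b]
  have h2 : (b⁻¹ * a⁻¹) * (a * b) * (b⁻¹ * a⁻¹) = b⁻¹ * a⁻¹ := by
    calc (b⁻¹ * a⁻¹) * (a * b) * (b⁻¹ * a⁻¹)
        = b⁻¹ * ((a⁻¹ * a) * (b * b⁻¹)) * a⁻¹ := by simp only [mul_assoc]
      _ = b⁻¹ * ((b * b⁻¹) * (a⁻¹ * a)) * a⁻¹ := by rw [← hcomm1]
      _ = (b⁻¹ * (b * b⁻¹)) * ((a⁻¹ * a) * a⁻¹) := by simp only [mul_assoc]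
      _ = b⁻¹ * a⁻¹ := by rw [imi' b, mul_assoc, imi' a]
  exact (invu h1 h2).symm

lemma right_cancel_all {a b : M} (h : ∀ y, a * y = b * y) : a = b := by
  have hf : a = b * (a⁻¹ * a) := by rw [← h]; exact (mim' a).symm
  have hg : b = a * (b⁻¹ * b) := by rw [h]; exact (mim' b).symm
  have key : a * ((b⁻¹ * b) * (a⁻¹ * a)) = a := by
    rw [← mul_assoc, ← hg, ← hf]
  have hgfg : (b⁻¹ * b) * ((a⁻¹ * a) * (b⁻¹ * b)) = (b⁻¹ * b) * (a⁻¹ * a) := by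
    rw [idem_comm (idem_dom a) (idem_dom b), ← mul_assoc, idem_dom]
  symm
  calc b = a * (b⁻¹ * b) := hg
    _ = (a * ((b⁻¹ * b) * (a⁻¹ * a))) * (b⁻¹ * b) := by rw [key]
    _ = a * ((b⁻¹ * b) * ((a⁻¹ * a) * (b⁻¹ * b))) := by simp only [mul_assoc]
    _ = a * ((b⁻¹ * b) * (a⁻¹ * a)) := by rw [hgfg]
    _ = a := key

lemma left_cancel_all {a b : M} (h : ∀ y, y * a = y * b) : a = b := by
  have hf : a = (a * a⁻¹) * b := by rw [← h]; exact (mim a).symm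
  have hg : b = (b * b⁻¹) * a := by rw [h]; exact (mim b).symm
  have key : ((a * a⁻¹) * (b * b⁻¹)) * a = a := by
    rw [mul_assoc, ← hg, ← hf]
  have hgfg : ((b * b⁻¹) * (a * a⁻¹)) * (b * b⁻¹) = (a * a⁻¹) * (b * b⁻¹) := by
    rw [idem_comm (idem_ran b) (idem_ran a), mul_assoc, idem_ran]
  symm
  calc b = (b * b⁻¹) * a := hg
    _ = (b * b⁻¹) * (((a * a⁻¹) * (b * b⁻¹)) * a) := by rw [key]
    _ = (((b * b⁻¹) * (a * a⁻¹)) * (b * b⁻¹)) * a := by simp only [mul_assoc]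
    _ = ((a * a⁻¹) * (b * b⁻¹)) * a := by rw [hgfg]
    _ = a := key

end InvBasic

/-- Uniqueness of inverses in a semigroup whose idempotents commute. -/
lemma invPair_unique_of_comm {M : Type*} [Semigroup M]
    (hcomm : ∀ e f : M, e * e = e → f * f = f → e * f = f * e)
    {a b c : M} (hb : IsInvPair a b) (hc : IsInvPair a c) : b = c := by
  obtain ⟨hb1, hb2⟩ := hb
  obtain ⟨hc1, hc2⟩ := hc
  have hba : (b * a) * (b * a) = b * a := by
    calc (b * a) * (b * a) = (b * a * b) * a := by simp only [mul_assoc]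
      _ = b * a := by rw [hb2]
  have hca : (c * a) * (c * a) = c * a := by
    calc (c * a) * (c * a) = (c * a * c) * a := by simp only [mul_assoc]
      _ = c * a := by rw [hc2]
  have hab : (a * b) * (a * b) = a * b := by
    calc (a * b) * (a * b) = (a * b * a) * b := by simp only [mul_assoc]
      _ = a * b := by rw [hb1]
  have hac : (a * c) * (a * c) = a * c := by
    calc (a * c) * (a * c) = (a * c * a) * c := by simp only [mul_assoc]
      _ = a * c := by rw [hc1]
  -- p := b*a, q := c*a : q*p = q, p*q = p, and they commute, so p = q
  have hqp : (c * a) * (b * a) = c * a := by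
    calc (c * a) * (b * a) = c * (a * b * a) := by simp only [mul_assoc]
      _ = c * a := by rw [hb1]
  have hpq : (b * a) * (c * a) = b * a := by
    calc (b * a) * (c * a) = b * (a * c * a) := by simp only [mul_assoc]
      _ = b * a := by rw [hc1]
  have hpq' : b * a = c * a := by
    rw [← hpq, hcomm _ _ hba hca, hqp]
  -- r := a*b, s := a*c similarly
  have hrs : (a * b) * (a * c) = a * c := by
    calc (a * b) * (a * c) = a * ((b * a) * c) := by simp only [mul_assoc]
      _ = a * ((c * a) * c) := by rw [hpq']
      _ = a * c := by rw [hc2]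
  have hsr : (a * c) * (a * b) = a * b := by
    calc (a * c) * (a * b) = a * ((c * a) * b) := by simp only [mul_assoc]
      _ = a * ((b * a) * b) := by rw [hpq']
      _ = a * b := by rw [hb2]
  have hab_ac : a * b = a * c := by
    rw [← hsr, ← hcomm _ _ hab hac, hrs]
  calc b = b * a * b := hb2.symm
    _ = b * (a * c) := by rw [mul_assoc, hab_ac]
    _ = (b * a) * c := by rw [mul_assoc]
    _ = (c * a) * c := by rw [hpq']
    _ = c := hc2
/-! ### Auxiliary: bitranslations of an inverse semigroup -/

section BitransBasic
variable {M : Type*} [InverseSemigroup M]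

lemma bt_mul_l (ω ω' : Bitrans M) (x : M) : (ω * ω').l x = ω.l (ω'.l x) := rfl
lemma bt_mul_r (ω ω' : Bitrans M) (x : M) : (ω * ω').r x = ω'.r (ω.r x) := rfl
lemma inner_l (a x : M) : (innerBitrans a).l x = a * x := rfl
lemma inner_r (a x : M) : (innerBitrans a).r x = x * a := rfl

lemma inner_mul (a b : M) :
    innerBitrans a * innerBitrans b = innerBitrans (a * b) := by
  ext x
  · show a * (b * x) = (a * b) * x; rw [mul_assoc]
  · show (x * a) * b = x * (a * b); rw [mul_assoc]

lemma mul_inner (ω : Bitrans M) (b : M) :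
    ω * innerBitrans b = innerBitrans (ω.l b) := by
  ext x
  · show ω.l (b * x) = ω.l b * x; rw [ω.l_mul]
  · show ω.r x * b = x * ω.l b; rw [← ω.linked]

lemma inner_mul' (b : M) (ω : Bitrans M) :
    innerBitrans b * ω = innerBitrans (ω.r b) := by
  ext x
  · show b * ω.l x = ω.r b * x; rw [ω.linked]
  · show ω.r (x * b) = x * ω.r b; rw [ω.r_mul]

lemma inner_inj {a b : M} (h : innerBitrans a = innerBitrans b) : a = b := by
  apply right_cancel_all (fun y => ?_)
  have := congrArg (fun ω : Bitrans M => ω.l y) h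
  exact this

/-- The canonical inverse of a bitranslation over an inverse semigroup. -/
def bstar (ω : Bitrans M) : Bitrans M where
  l x := (ω.r x⁻¹)⁻¹
  r x := (ω.l x⁻¹)⁻¹
  l_mul s t := by
    show (ω.r (s * t)⁻¹)⁻¹ = (ω.r s⁻¹)⁻¹ * t
    rw [mul_inv_rev', ω.r_mul, mul_inv_rev', inv_inv']
  r_mul s t := by
    show (ω.l (s * t)⁻¹)⁻¹ = s * (ω.l t⁻¹)⁻¹
    rw [mul_inv_rev', ω.l_mul, mul_inv_rev', inv_inv']
  linked s t := by
    show s * (ω.r t⁻¹)⁻¹ = (ω.l s⁻¹)⁻¹ * t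
    have h : (s * (ω.r t⁻¹)⁻¹)⁻¹ = ((ω.l s⁻¹)⁻¹ * t)⁻¹ := by
      rw [mul_inv_rev', mul_inv_rev', inv_inv', inv_inv', ω.linked]
    have := congrArg (fun z : M => z⁻¹) h
    simpa only [inv_inv'] using this

lemma bstar_l (ω : Bitrans M) (x : M) : (bstar ω).l x = (ω.r x⁻¹)⁻¹ := rfl
lemma bstar_r (ω : Bitrans M) (x : M) : (bstar ω).r x = (ω.l x⁻¹)⁻¹ := rfl

lemma bstar_l_val (ω : Bitrans M) (x : M) :
    (bstar ω).l (ω.l x) = x * ((ω.l x)⁻¹ * ω.l x) := by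
  set a := ω.l x with ha
  set u := ω.r a⁻¹ with hu
  show u⁻¹ = x * (a⁻¹ * a)
  have hux : u * x = a⁻¹ * a := by
    have h0 := ω.linked a⁻¹ x
    rw [← ha, ← hu] at h0
    exact h0.symm
  have hu2 : (a⁻¹ * a) * u = u := by rw [hu, ← ω.r_mul, imi]
  have h1 : u * (x * (a⁻¹ * a)) * u = u := by
    calc u * (x * (a⁻¹ * a)) * u
        = (u * x) * (a⁻¹ * (a * u)) := by simp only [mul_assoc]
      _ = (a⁻¹ * a) * (a⁻¹ * (a * u)) := by rw [hux]
      _ = ((a⁻¹ * a) * a⁻¹) * (a * u) := by simp only [mul_assoc]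
      _ = a⁻¹ * (a * u) := by rw [imi]
      _ = u := by rw [← mul_assoc, hu2]
  have h2 : (x * (a⁻¹ * a)) * u * (x * (a⁻¹ * a)) = x * (a⁻¹ * a) := by
    calc (x * (a⁻¹ * a)) * u * (x * (a⁻¹ * a))
        = (x * (a⁻¹ * a)) * ((u * x) * (a⁻¹ * a)) := by simp only [mul_assoc]
      _ = (x * (a⁻¹ * a)) * ((a⁻¹ * a) * (a⁻¹ * a)) := by rw [hux]
      _ = (x * (a⁻¹ * a)) * (a⁻¹ * a) := by rw [idem_dom]
      _ = x * ((a⁻¹ * a) * (a⁻¹ * a)) := by rw [mul_assoc]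
      _ = x * (a⁻¹ * a) := by rw [idem_dom]
  exact (invu h1 h2).symm

lemma bstar_r_val (ω : Bitrans M) (x : M) :
    (bstar ω).r (ω.r x) = ((ω.r x) * (ω.r x)⁻¹) * x := by
  set b := ω.r x with hb
  set w := ω.l b⁻¹ with hw
  show w⁻¹ = (b * b⁻¹) * x
  have hxw : x * w = b * b⁻¹ := by
    have h0 := ω.linked x b⁻¹
    rw [← hb, ← hw] at h0
    exact h0
  have hw2 : w * (b * b⁻¹) = w := by rw [hw, ← ω.l_mul, imi']
  have h1 : w * ((b * b⁻¹) * x) * w = w := by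
    calc w * ((b * b⁻¹) * x) * w
        = (w * (b * b⁻¹)) * (x * w) := by simp only [mul_assoc]
      _ = w * (b * b⁻¹) := by rw [hxw, mul_assoc, idem_ran]
      _ = w := hw2
  have h2 : ((b * b⁻¹) * x) * w * ((b * b⁻¹) * x) = (b * b⁻¹) * x := by
    calc ((b * b⁻¹) * x) * w * ((b * b⁻¹) * x)
        = (b * b⁻¹) * ((x * w) * ((b * b⁻¹) * x)) := by simp only [mul_assoc]
      _ = (b * b⁻¹) * ((b * b⁻¹) * ((b * b⁻¹) * x)) := by rw [hxw]
      _ = ((b * b⁻¹) * (b * b⁻¹)) * ((b * b⁻¹) * x) := by simp only [mul_assoc]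
      _ = (b * b⁻¹) * ((b * b⁻¹) * x) := by rw [idem_ran]
      _ = ((b * b⁻¹) * (b * b⁻¹)) * x := by simp only [mul_assoc]
      _ = (b * b⁻¹) * x := by rw [idem_ran]
  exact (invu h1 h2).symm

lemma mul_bstar_mul (ω : Bitrans M) : ω * bstar ω * ω = ω := by
  ext x
  · show ω.l ((bstar ω).l (ω.l x)) = ω.l x
    rw [bstar_l_val, ω.l_mul, ← mul_assoc, mim]
  · show ω.r ((bstar ω).r (ω.r x)) = ω.r x
    rw [bstar_r_val, ω.r_mul]
    exact mim _
lemma bstar_bstar (w : Bitrans M) : bstar (bstar w) = w := by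
  ext x
  · show ((bstar w).r x⁻¹)⁻¹ = w.l x
    rw [bstar_r, inv_inv', inv_inv']
  · show ((bstar w).l x⁻¹)⁻¹ = w.r x
    rw [bstar_l, inv_inv', inv_inv']

lemma bstar_mul_bstar (w : Bitrans M) : bstar w * w * bstar w = bstar w := by
  have := mul_bstar_mul (bstar w)
  rwa [bstar_bstar] at this

lemma isInvPair_bstar (w : Bitrans M) : IsInvPair w (bstar w) :=
  ⟨mul_bstar_mul w, bstar_mul_bstar w⟩

lemma bstarmul_l (w : Bitrans M) (x : M) :
    (bstar w * w).l x = x * ((w.l x)⁻¹ * w.l x) := bstar_l_val w x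

lemma bstarmul_r (w : Bitrans M) (x : M) :
    (bstar w * w).r x = ((w.l x⁻¹)⁻¹ * w.l x⁻¹) * x := by
  show w.r ((w.l x⁻¹)⁻¹) = ((w.l x⁻¹)⁻¹ * w.l x⁻¹) * x
  have h := bstar_l_val w x⁻¹
  rw [bstar_l] at h
  have h2 := congrArg (fun z : M => z⁻¹) h
  simp only [inv_inv'] at h2
  rw [h2]
  simp only [mul_inv_rev', inv_inv', mul_assoc]

lemma mulbstar_l (w : Bitrans M) (x : M) :
    (w * bstar w).l x = x * ((w.r x⁻¹) * (w.r x⁻¹)⁻¹) := by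
  show w.l ((w.r x⁻¹)⁻¹) = x * ((w.r x⁻¹) * (w.r x⁻¹)⁻¹)
  have h := bstar_r_val w x⁻¹
  rw [bstar_r] at h
  have h2 := congrArg (fun z : M => z⁻¹) h
  simp only [inv_inv'] at h2
  rw [h2]
  simp only [mul_inv_rev', inv_inv', mul_assoc]

lemma mulbstar_r (w : Bitrans M) (x : M) :
    (w * bstar w).r x = ((w.r x) * (w.r x)⁻¹) * x := bstar_r_val w x

/-- Uniqueness of inverses in the translational hull of an inverse semigroup. -/
lemma invPair_bstar_unique {w b : Bitrans M} (h : IsInvPair w b) : b = bstar w := by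
  obtain ⟨h1, h2⟩ := h
  have hwg : w * (b * w) = w := by rw [← mul_assoc, h1]
  have hgh : (b * w) * (bstar w * w) = b * w := by
    have e : (b * w) * (bstar w * w) = b * (w * bstar w * w) := by
      simp only [mul_assoc]
    rw [e, mul_bstar_mul]
  have hhg : (bstar w * w) * (b * w) = bstar w * w := by
    have e : (bstar w * w) * (b * w) = bstar w * (w * b * w) := by
      simp only [mul_assoc]
    rw [e, h1]
  have hl : ∀ x, (b * w).l x = (bstar w * w).l x := by
    intro x
    set d := (w.l x)⁻¹ * w.l x with hd
    have hy : w.l ((b * w).l x) = w.l x :=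
      congrArg (fun z : Bitrans M => z.l x) hwg
    have hA : (b * w).l x * d = (b * w).l x := by
      have e1 : (b * w).l ((bstar w * w).l x) = (b * w).l x :=
        congrArg (fun z : Bitrans M => z.l x) hgh
      rw [bstarmul_l, (b * w).l_mul, ← hd] at e1
      exact e1
    have hB : (b * w).l x * d = x * d := by
      have e2 : (bstar w * w).l ((b * w).l x) = (bstar w * w).l x :=
        congrArg (fun z : Bitrans M => z.l x) hhg
      rw [bstarmul_l, bstarmul_l, hy, ← hd] at e2
      exact e2
    rw [bstarmul_l, ← hd, ← hB, hA]
  have hr : ∀ x, (b * w).r x = (bstar w * w).r x := by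
    intro x
    apply right_cancel_all (fun z => ?_)
    rw [← (b * w).linked, ← (bstar w * w).linked, hl]
  have hbw : b * w = bstar w * w := by
    ext x
    · exact hl x
    · exact hr x
  have hgw : (w * b) * w = w := h1
  have hgh' : (w * b) * (w * bstar w) = w * bstar w := by
    have e : (w * b) * (w * bstar w) = (w * b * w) * bstar w := by
      simp only [mul_assoc]
    rw [e, h1]
  have hhg' : (w * bstar w) * (w * b) = w * b := by
    have e : (w * bstar w) * (w * b) = (w * bstar w * w) * b := by
      simp only [mul_assoc]
    rw [e, mul_bstar_mul]
  have hr' : ∀ x, (w * b).r x = (w * bstar w).r x := by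
    intro x
    set e := (w.r x) * (w.r x)⁻¹ with he
    have hy : w.r ((w * b).r x) = w.r x :=
      congrArg (fun z : Bitrans M => z.r x) hgw
    have hA : e * (w * b).r x = (w * b).r x := by
      have e1 : (w * b).r ((w * bstar w).r x) = (w * b).r x :=
        congrArg (fun z : Bitrans M => z.r x) hhg'
      rw [mulbstar_r, (w * b).r_mul, ← he] at e1
      exact e1
    have hB : e * (w * b).r x = e * x := by
      have e2 : (w * bstar w).r ((w * b).r x) = (w * bstar w).r x :=
        congrArg (fun z : Bitrans M => z.r x) hgh'
      rw [mulbstar_r, mulbstar_r, hy, ← he] at e2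
      exact e2
    rw [mulbstar_r, ← he, ← hB, hA]
  have hwb : w * b = w * bstar w := by
    ext x
    · apply left_cancel_all (fun z => ?_)
      rw [(w * b).linked, (w * bstar w).linked, hr']
    · exact hr' x
  calc b = b * w * b := h2.symm
    _ = (bstar w * w) * b := by rw [hbw]
    _ = bstar w * (w * b) := by rw [mul_assoc]
    _ = bstar w * (w * bstar w) := by rw [hwb]
    _ = bstar w * w * bstar w := by rw [← mul_assoc]
    _ = bstar w := bstar_mul_bstar w

lemma idem_l_form {w : Bitrans M} (hw : w * w = w) (x : M) :
    w.l x = x * ((w.l x)⁻¹ * w.l x) := by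
  have hself : IsInvPair w w := ⟨by rw [hw, hw], by rw [hw, hw]⟩
  have hb := invPair_bstar_unique hself
  calc w.l x = (w * w).l x := by rw [hw]
    _ = (bstar w * w).l x := by rw [← hb]
    _ = x * ((w.l x)⁻¹ * w.l x) := bstarmul_l w x

lemma idem_r_form {w : Bitrans M} (hw : w * w = w) (x : M) :
    w.r x = ((w.l x⁻¹)⁻¹ * w.l x⁻¹) * x := by
  have hself : IsInvPair w w := ⟨by rw [hw, hw], by rw [hw, hw]⟩
  have hb := invPair_bstar_unique hself
  calc w.r x = (w * w).r x := by rw [hw]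
    _ = (bstar w * w).r x := by rw [← hb]
    _ = ((w.l x⁻¹)⁻¹ * w.l x⁻¹) * x := bstarmul_r w x

/-- Idempotent bitranslations over an inverse semigroup commute. -/
lemma idem_bt_comm {a b : Bitrans M} (ha : a * a = a) (hb : b * b = b) :
    a * b = b * a := by
  have key : ∀ (p q : Bitrans M), p * p = p → q * q = q →
      ∀ x, p.l (q.l x) = x * (((q.l x)⁻¹ * q.l x) * ((p.l x)⁻¹ * p.l x)) := by
    intro p q hp hq x
    calc p.l (q.l x)
        = p.l (x * ((q.l x)⁻¹ * q.l x)) := by rw [← idem_l_form hq]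
      _ = p.l x * ((q.l x)⁻¹ * q.l x) := by rw [p.l_mul]
      _ = (x * ((p.l x)⁻¹ * p.l x)) * ((q.l x)⁻¹ * q.l x) := by
          rw [← idem_l_form hp]
      _ = x * (((p.l x)⁻¹ * p.l x) * ((q.l x)⁻¹ * q.l x)) := by rw [mul_assoc]
      _ = x * (((q.l x)⁻¹ * q.l x) * ((p.l x)⁻¹ * p.l x)) := by
          rw [idem_comm (idem_dom (p.l x)) (idem_dom (q.l x))]
  have keyr : ∀ (p q : Bitrans M), p * p = p → q * q = q →
      ∀ x, q.r (p.r x) =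
        (((q.l x⁻¹)⁻¹ * q.l x⁻¹) * ((p.l x⁻¹)⁻¹ * p.l x⁻¹)) * x := by
    intro p q hp hq x
    calc q.r (p.r x)
        = q.r ((((p.l x⁻¹)⁻¹ * p.l x⁻¹)) * x) := by rw [← idem_r_form hp]
      _ = ((p.l x⁻¹)⁻¹ * p.l x⁻¹) * q.r x := by rw [q.r_mul]
      _ = ((p.l x⁻¹)⁻¹ * p.l x⁻¹) * ((((q.l x⁻¹)⁻¹ * q.l x⁻¹)) * x) := by
          rw [← idem_r_form hq]
      _ = (((p.l x⁻¹)⁻¹ * p.l x⁻¹) * ((q.l x⁻¹)⁻¹ * q.l x⁻¹)) * x := by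
          simp only [mul_assoc]
      _ = (((q.l x⁻¹)⁻¹ * q.l x⁻¹) * ((p.l x⁻¹)⁻¹ * p.l x⁻¹)) * x := by
          rw [idem_comm (idem_dom (p.l x⁻¹)) (idem_dom (q.l x⁻¹))]
  ext x
  · show a.l (b.l x) = b.l (a.l x)
    rw [key a b ha hb x, key b a hb ha x,
      idem_comm (idem_dom (b.l x)) (idem_dom (a.l x))]
  · show b.r (a.r x) = a.r (b.r x)
    rw [keyr a b ha hb x, keyr b a hb ha x,
      idem_comm (idem_dom (b.l x⁻¹)) (idem_dom (a.l x⁻¹))]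

lemma bstar_inner (p : M) : bstar (innerBitrans p) = innerBitrans p⁻¹ := by
  ext x
  · show ((innerBitrans p).r x⁻¹)⁻¹ = p⁻¹ * x
    rw [inner_r, mul_inv_rev', inv_inv']
  · show ((innerBitrans p).l x⁻¹)⁻¹ = x * p⁻¹
    rw [inner_l, mul_inv_rev', inv_inv']

end BitransBasic
/-! ### Auxiliary: congruences on inverse semigroups -/

section ConBasic
variable {S : Type*} [InverseSemigroup S] (θ : Con S)

lemma lallement {x : S} (h : θ (x * x) x) :
    ∃ e : S, e * e = e ∧ θ x e := by
  refine ⟨(x * x⁻¹) * (x⁻¹ * x), idem_mul (idem_ran x) (idem_dom x), ?_⟩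
  have key : (x * x) * (x⁻¹ * x⁻¹) * (x * x) = x * x := by
    calc (x * x) * (x⁻¹ * x⁻¹) * (x * x)
        = x * ((x * x⁻¹) * (x⁻¹ * x)) * x := by simp only [mul_assoc]
      _ = x * ((x⁻¹ * x) * (x * x⁻¹)) * x := by
          rw [idem_comm (idem_ran x) (idem_dom x)]
      _ = (x * (x⁻¹ * x)) * ((x * x⁻¹) * x) := by simp only [mul_assoc]
      _ = x * x := by rw [mim' x, mul_assoc, mim' x]
  have hxe : x * (x⁻¹ * x⁻¹) * x = (x * x⁻¹) * (x⁻¹ * x) := by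
    simp only [mul_assoc]
  have h2 : θ ((x * x) * (x⁻¹ * x⁻¹) * (x * x)) (x * (x⁻¹ * x⁻¹) * x) :=
    θ.mul (θ.mul h (θ.refl (x⁻¹ * x⁻¹))) h
  rw [key, hxe] at h2
  exact θ.trans (θ.symm h) h2

lemma q_idem_comm : ∀ u v : θ.Quotient,
    u * u = u → v * v = v → u * v = v * u := by
  intro u v hu hv
  induction u using Con.induction_on with | H x =>
  induction v using Con.induction_on with | H y =>
  have hxx : ((x * x : S) : θ.Quotient) = (x : θ.Quotient) := by
    rw [Con.coe_mul]; exact hu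
  have hyy : ((y * y : S) : θ.Quotient) = (y : θ.Quotient) := by
    rw [Con.coe_mul]; exact hv
  obtain ⟨e, he, hxe⟩ := lallement θ (θ.eq.mp hxx)
  obtain ⟨f, hf, hyf⟩ := lallement θ (θ.eq.mp hyy)
  have hx : (x : θ.Quotient) = (e : θ.Quotient) := θ.eq.mpr hxe
  have hy : (y : θ.Quotient) = (f : θ.Quotient) := θ.eq.mpr hyf
  rw [hx, hy, ← Con.coe_mul, ← Con.coe_mul, idem_comm he hf]

lemma con_inv {a b : S} (h : θ a b) : θ a⁻¹ b⁻¹ := by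
  have hb : IsInvPair (a : θ.Quotient) ((a⁻¹ : S) : θ.Quotient) := by
    constructor
    · rw [← Con.coe_mul, ← Con.coe_mul, mim]
    · rw [← Con.coe_mul, ← Con.coe_mul, imi]
  have hab : (a : θ.Quotient) = (b : θ.Quotient) := θ.eq.mpr h
  have hc : IsInvPair (a : θ.Quotient) ((b⁻¹ : S) : θ.Quotient) := by
    rw [hab]
    constructor
    · rw [← Con.coe_mul, ← Con.coe_mul, mim]
    · rw [← Con.coe_mul, ← Con.coe_mul, imi]
  exact θ.eq.mp (invPair_unique_of_comm (q_idem_comm θ) hb hc)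

/-- Inversion on the quotient. -/
def qinv : θ.Quotient → θ.Quotient :=
  Quotient.map' (·⁻¹) (fun _ _ h => con_inv θ h)

lemma qinv_coe (s : S) : qinv θ (s : θ.Quotient) = ((s⁻¹ : S) : θ.Quotient) := rfl

/-- The quotient of an inverse semigroup by a congruence is inverse. -/
def instQ : InverseSemigroup θ.Quotient :=
  let _i : Inv θ.Quotient := ⟨qinv θ⟩
  { (inferInstance : Semigroup θ.Quotient) with
    inv := qinv θ
    mul_inv_mul := fun a => by
      induction a using Con.induction_on with | H s =>
      show (s : θ.Quotient) * qinv θ s * s = s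
      rw [qinv_coe, ← Con.coe_mul, ← Con.coe_mul, mim]
    inv_mul_inv := fun a => by
      induction a using Con.induction_on with | H s =>
      show qinv θ s * (s : θ.Quotient) * qinv θ s = qinv θ s
      rw [qinv_coe, ← Con.coe_mul, ← Con.coe_mul, imi]
    inv_unique := fun {a b} h1 h2 => by
      have hb : IsInvPair a b := ⟨h1, h2⟩
      have hc : IsInvPair a (qinv θ a) := by
        induction a using Con.induction_on with | H s =>
        constructor
        · show (s : θ.Quotient) * qinv θ s * s = s
          rw [qinv_coe, ← Con.coe_mul, ← Con.coe_mul, mim]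
        · show qinv θ s * (s : θ.Quotient) * qinv θ s = qinv θ s
          rw [qinv_coe, ← Con.coe_mul, ← Con.coe_mul, imi]
      exact invPair_unique_of_comm (q_idem_comm θ) hb hc }

lemma mem_ker_iff {x : S} :
    x ∈ KerCon θ ↔ (x : θ.Quotient) * (x : θ.Quotient) = (x : θ.Quotient) := by
  constructor
  · rintro ⟨e, he, hxe⟩
    have hx : (x : θ.Quotient) = (e : θ.Quotient) := θ.eq.mpr hxe
    rw [hx, ← Con.coe_mul, he]
  · intro h
    have hxx : ((x * x : S) : θ.Quotient) = (x : θ.Quotient) := by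
      rw [Con.coe_mul]; exact h
    obtain ⟨e, he, hxe⟩ := lallement θ (θ.eq.mp hxx)
    exact ⟨e, he, hxe⟩

end ConBasic
/-! ### Auxiliary: consequences of an almost Billhardt transversal -/

section InvMore
variable {M : Type*} [InverseSemigroup M]

lemma conj_idem {t e : M} (he : e * e = e) :
    ((t * e) * t⁻¹) * ((t * e) * t⁻¹) = (t * e) * t⁻¹ := by
  calc ((t * e) * t⁻¹) * ((t * e) * t⁻¹)
      = t * ((e * (t⁻¹ * t)) * (e * t⁻¹)) := by simp only [mul_assoc]
    _ = t * (((t⁻¹ * t) * e) * (e * t⁻¹)) := by rw [idem_comm he (idem_dom t)]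
    _ = t * ((t⁻¹ * t) * ((e * e) * t⁻¹)) := by simp only [mul_assoc]
    _ = t * ((t⁻¹ * t) * (e * t⁻¹)) := by rw [he]
    _ = (t * (t⁻¹ * t)) * (e * t⁻¹) := by simp only [mul_assoc]
    _ = (t * e) * t⁻¹ := by rw [mim', ← mul_assoc]

end InvMore

section XiLemmas
variable {S : Type*} [InverseSemigroup S] {θ : Con S} {ξ : θ.Quotient → Bitrans S}

lemma xi_invpair (hmulξ : ∀ t u, ξ (t * u) = ξ t * ξ u) (s : S) :
    IsInvPair (ξ (s : θ.Quotient)) (ξ ((s⁻¹ : S) : θ.Quotient)) := by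
  constructor
  · rw [← hmulξ, ← hmulξ, ← Con.coe_mul, ← Con.coe_mul, mim]
  · rw [← hmulξ, ← hmulξ, ← Con.coe_mul, ← Con.coe_mul, imi]

lemma xi_range_inner (hB1 : ∀ (t : θ.Quotient) (s : S),
      (((ξ t).l s : S) : θ.Quotient) = t * (s : θ.Quotient) ∧
      (((ξ t).r s : S) : θ.Quotient) = (s : θ.Quotient) * t)
    {u : θ.Quotient} {x : S} (h : ξ u = innerBitrans x) :
    u = (x : θ.Quotient) := by
  letI := instQ θ
  apply right_cancel_all (fun y => ?_)
  induction y using Con.induction_on with | H z =>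
  have h1 := (hB1 u z).1
  rw [h, inner_l, Con.coe_mul] at h1
  exact h1.symm

lemma Lright (hAB : IsAlmostBillhardt θ ξ)
    (hmulξ : ∀ t u, ξ (t * u) = ξ t * ξ u) (s : S) :
    (ξ ((s⁻¹ * s : S) : θ.Quotient)).r s = s := by
  obtain ⟨hresp, hB1, hB2⟩ := hAB
  by_cases hπ : innerBitrans s ∈ Set.range ξ
  · -- degenerate case : ξ [s] is the inner bitranslation of s
    obtain ⟨u, hu⟩ := hπ
    have huq : u = (s : θ.Quotient) := xi_range_inner hB1 hu
    have hxis : ξ ((s : θ.Quotient)) = innerBitrans s := by rw [← huq]; exact hu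
    have hkey : (ξ ((s⁻¹ : S) : θ.Quotient)).r s * s = s := by
      have h3 : innerBitrans s * ξ ((s⁻¹ : S) : θ.Quotient) * innerBitrans s
          = innerBitrans s := by
        rw [← hxis, ← hmulξ, ← hmulξ, ← Con.coe_mul, ← Con.coe_mul, mim]
      rw [inner_mul', inner_mul] at h3
      exact inner_inj h3
    have hdec : ξ ((s⁻¹ * s : S) : θ.Quotient)
        = innerBitrans ((ξ ((s⁻¹ : S) : θ.Quotient)).l s) := by
      rw [Con.coe_mul, hmulξ, hxis, mul_inner]
    rw [hdec, inner_r, (ξ ((s⁻¹ : S) : θ.Quotient)).linked s s]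
    exact hkey
  · -- B2 case
    have hsbar : innerBitrans s ∈ Sbar θ ξ :=
      Subsemigroup.subset_closure (Or.inl (Or.inl ⟨s, rfl⟩))
    have hinvξ : IsInvPair (ξ (s : θ.Quotient)) (ξ ((s⁻¹ : S) : θ.Quotient)) :=
      xi_invpair hmulξ s
    have hinvπ : IsInvPair (innerBitrans s) (innerBitrans s⁻¹) := by
      constructor
      · rw [inner_mul, inner_mul, mim]
      · rw [inner_mul, inner_mul, imi]
    have hcls : ∀ x : S,
        (((innerBitrans s).l x : S) : θ.Quotient)
          = (s : θ.Quotient) * (x : θ.Quotient) ∧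
        (((innerBitrans s).r x : S) : θ.Quotient)
          = (x : θ.Quotient) * (s : θ.Quotient) := fun x =>
      ⟨by rw [inner_l, Con.coe_mul], by rw [inner_r, Con.coe_mul]⟩
    obtain ⟨e, _he1, _he2, heq⟩ :=
      hB2 (innerBitrans s) hsbar hπ (s : θ.Quotient) hcls
        (ξ ((s⁻¹ : S) : θ.Quotient)) (innerBitrans s⁻¹) hinvξ hinvπ
    have hZ : ξ ((s⁻¹ : S) : θ.Quotient) * ξ ((s : S) : θ.Quotient)
        = ξ ((s⁻¹ * s : S) : θ.Quotient) := by
      rw [← hmulξ, ← Con.coe_mul]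
    have hdd : ((s⁻¹ * s : S) : θ.Quotient) * ((s⁻¹ * s : S) : θ.Quotient)
        = ((s⁻¹ * s : S) : θ.Quotient) := by
      rw [← Con.coe_mul, idem_dom]
    have hZZ : ξ ((s⁻¹ * s : S) : θ.Quotient) * ξ ((s⁻¹ * s : S) : θ.Quotient)
        = ξ ((s⁻¹ * s : S) : θ.Quotient) := by
      rw [← hmulξ, hdd]
    rw [inner_mul, hZ] at heq
    have habs : innerBitrans (s⁻¹ * s) * ξ ((s⁻¹ * s : S) : θ.Quotient)
        = innerBitrans (s⁻¹ * s) := by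
      rw [heq, mul_assoc, hZZ]
    have hev := congrArg (fun w : Bitrans S => w.r s) habs
    simp only [bt_mul_r, inner_r] at hev
    rw [mim' s] at hev
    exact hev

lemma Lleft (hAB : IsAlmostBillhardt θ ξ)
    (hmulξ : ∀ t u, ξ (t * u) = ξ t * ξ u) (s : S) :
    (ξ ((s * s⁻¹ : S) : θ.Quotient)).l s = s := by
  have hdd : ((s * s⁻¹ : S) : θ.Quotient) * ((s * s⁻¹ : S) : θ.Quotient)
      = ((s * s⁻¹ : S) : θ.Quotient) := by
    rw [← Con.coe_mul, idem_ran]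
  have hZZ : ξ ((s * s⁻¹ : S) : θ.Quotient) * ξ ((s * s⁻¹ : S) : θ.Quotient)
      = ξ ((s * s⁻¹ : S) : θ.Quotient) := by rw [← hmulξ, hdd]
  set Z := ξ ((s * s⁻¹ : S) : θ.Quotient) with hZdef
  have hri : Z.r s⁻¹ = s⁻¹ := by
    have := Lright hAB hmulξ s⁻¹
    rw [inv_inv'] at this
    exact this
  have hr2 : Z.r (s * s⁻¹) = s * s⁻¹ := by rw [Z.r_mul, hri]
  have hlink : (s * s⁻¹) * Z.l s = s := by
    rw [Z.linked, hr2]; exact mim s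
  have hform := idem_l_form hZZ s
  have hsd : s * ((Z.l s)⁻¹ * Z.l s) = s := by
    have h := hlink
    rw [hform, ← mul_assoc, mim] at h
    exact h
  rw [hform, hsd]

lemma Lright' (hAB : IsAlmostBillhardt θ ξ)
    (hmulξ : ∀ t u, ξ (t * u) = ξ t * ξ u) {u : θ.Quotient} {s : S}
    (hu : u * u = u) (hle : nle ((s⁻¹ * s : S) : θ.Quotient) u) :
    (ξ u).r s = s := by
  obtain ⟨f, hf, hdf⟩ := hle
  have hdu : ((s⁻¹ * s : S) : θ.Quotient) * u = ((s⁻¹ * s : S) : θ.Quotient) := by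
    rw [hdf, mul_assoc, hu]
  have h1 : (ξ u).r ((ξ ((s⁻¹ * s : S) : θ.Quotient)).r s) = (ξ u).r s := by
    rw [Lright hAB hmulξ s]
  calc (ξ u).r s
      = (ξ u).r ((ξ ((s⁻¹ * s : S) : θ.Quotient)).r s) := h1.symm
    _ = (ξ ((s⁻¹ * s : S) : θ.Quotient) * ξ u).r s := rfl
    _ = (ξ (((s⁻¹ * s : S) : θ.Quotient) * u)).r s := by rw [hmulξ]
    _ = (ξ ((s⁻¹ * s : S) : θ.Quotient)).r s := by rw [hdu]
    _ = s := Lright hAB hmulξ s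

lemma Lleft' (hAB : IsAlmostBillhardt θ ξ)
    (hmulξ : ∀ t u, ξ (t * u) = ξ t * ξ u) {u : θ.Quotient} {s : S}
    (hu : u * u = u) (hle : nle ((s * s⁻¹ : S) : θ.Quotient) u) :
    (ξ u).l s = s := by
  letI := instQ θ
  obtain ⟨f, hf, hdf⟩ := hle
  have hd : ((s * s⁻¹ : S) : θ.Quotient) * ((s * s⁻¹ : S) : θ.Quotient)
      = ((s * s⁻¹ : S) : θ.Quotient) := by rw [← Con.coe_mul, idem_ran]
  have hud : u * ((s * s⁻¹ : S) : θ.Quotient) = ((s * s⁻¹ : S) : θ.Quotient) := by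
    rw [hdf, ← mul_assoc]; erw [idem_comm hu hf, mul_assoc, hu, ← hdf]
  have h1 : (ξ u).l ((ξ ((s * s⁻¹ : S) : θ.Quotient)).l s) = (ξ u).l s := by
    rw [Lleft hAB hmulξ s]
  calc (ξ u).l s
      = (ξ u).l ((ξ ((s * s⁻¹ : S) : θ.Quotient)).l s) := h1.symm
    _ = (ξ u * ξ ((s * s⁻¹ : S) : θ.Quotient)).l s := rfl
    _ = (ξ (u * ((s * s⁻¹ : S) : θ.Quotient))).l s := by rw [hmulξ]
    _ = (ξ ((s * s⁻¹ : S) : θ.Quotient)).l s := by rw [hud]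
    _ = s := Lleft hAB hmulξ s

end XiLemmas
section InvMore2
variable {M : Type*} [InverseSemigroup M]

lemma dom_mul_idem {t e : M} (he : e * e = e) :
    (t * e)⁻¹ * (t * e) = e * (t⁻¹ * t) := by
  rw [mul_inv_rev', inv_idem' he]
  calc (e * t⁻¹) * (t * e) = e * ((t⁻¹ * t) * e) := by simp only [mul_assoc]
    _ = e * (e * (t⁻¹ * t)) := by rw [idem_comm (idem_dom t) he]
    _ = (e * e) * (t⁻¹ * t) := by simp only [mul_assoc]
    _ = e * (t⁻¹ * t) := by rw [he]

end InvMore2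

section BackwardDefs
variable {S : Type*} [InverseSemigroup S] (θ : Con S)

lemma ker_mul_mem {x y : S} (hx : x ∈ KerCon θ) (hy : y ∈ KerCon θ) :
    x * y ∈ KerCon θ := by
  letI := instQ θ
  rw [mem_ker_iff θ] at hx hy ⊢
  rw [Con.coe_mul]
  exact idem_mul hx hy

lemma ker_inv_mem {x : S} (hx : x ∈ KerCon θ) : x⁻¹ ∈ KerCon θ := by
  letI := instQ θ
  rw [mem_ker_iff θ] at hx ⊢
  have h1 : ((x⁻¹ : S) : θ.Quotient) = (x : θ.Quotient) := by
    rw [← qinv_coe θ x]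
    exact inv_idem' hx
  rw [h1]; exact hx

/-- The kernel of `θ` as a type. -/
def KS : Type _ := {x : S // x ∈ KerCon θ}

instance : Mul (KS θ) := ⟨fun a b => ⟨a.1 * b.1, ker_mul_mem θ a.2 b.2⟩⟩
instance : Inv (KS θ) := ⟨fun a => ⟨a.1⁻¹, ker_inv_mem θ a.2⟩⟩

lemma KS_mul_val (a b : KS θ) : (a * b).1 = a.1 * b.1 := rfl
lemma KS_inv_val (a : KS θ) : (a⁻¹).1 = a.1⁻¹ := rfl

/-- The kernel of `θ` is an inverse semigroup. -/
def instKS : InverseSemigroup (KS θ) :=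
  { toSemigroup := { mul_assoc := fun a b c => Subtype.ext (mul_assoc a.1 b.1 c.1) }
    toInv := inferInstance
    mul_inv_mul := fun a => Subtype.ext (mim a.1)
    inv_mul_inv := fun a => Subtype.ext (imi a.1)
    inv_unique := fun {a b} h1 h2 =>
      Subtype.ext (invu (congrArg Subtype.val h1) (congrArg Subtype.val h2)) }

variable {θ}
variable (ξ : θ.Quotient → Bitrans S)

/-- shorthand for hypothesis (B1) -/
def B1Hyp : Prop := ∀ (t : θ.Quotient) (s : S),
    (((ξ t).l s : S) : θ.Quotient) = t * (s : θ.Quotient) ∧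
    (((ξ t).r s : S) : θ.Quotient) = (s : θ.Quotient) * t

lemma actK_mem (hB1 : B1Hyp ξ) (t : θ.Quotient) (a : KS θ) :
    (ξ (qinv θ t)).r ((ξ t).l a.1) ∈ KerCon θ := by
  letI := instQ θ
  rw [mem_ker_iff θ]
  have h1 : (((ξ (qinv θ t)).r ((ξ t).l a.1) : S) : θ.Quotient)
      = (t * (a.1 : θ.Quotient)) * t⁻¹ := by
    rw [(hB1 (qinv θ t) _).2, (hB1 t a.1).1]
    rfl
  rw [h1]
  exact conj_idem ((mem_ker_iff θ).mp a.2)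

/-- The action of the quotient on the kernel. -/
def actK (hB1 : B1Hyp ξ) : θ.Quotient → KS θ → KS θ := fun t a =>
  ⟨(ξ (qinv θ t)).r ((ξ t).l a.1), actK_mem ξ hB1 t a⟩

lemma phiK_mem (hB1 : B1Hyp ξ) (s : S) : (ξ (qinv θ (s : θ.Quotient))).r s ∈ KerCon θ := by
  rw [mem_ker_iff θ]
  have h1 : (((ξ (qinv θ (s : θ.Quotient))).r s : S) : θ.Quotient)
      = (s : θ.Quotient) * qinv θ (s : θ.Quotient) := (hB1 _ s).2
  rw [h1, qinv_coe, ← Con.coe_mul, ← Con.coe_mul]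
  exact congrArg _ (idem_ran s)

/-- The isomorphism onto the full restricted semidirect product. -/
def phiK (hB1 : B1Hyp ξ) : S → KS θ × θ.Quotient := fun s =>
  (⟨(ξ (qinv θ (s : θ.Quotient))).r s, phiK_mem ξ hB1 s⟩, (s : θ.Quotient))

end BackwardDefs
universe v

lemma backward_constr {S : Type v} [InverseSemigroup S] (θ : Con S)
    (ξ : θ.Quotient → Bitrans S) (hAB : IsAlmostBillhardt θ ξ)
    (hmulξ : ∀ t u : θ.Quotient, ξ (t * u) = ξ t * ξ u) :
    ∃ (K T : Type v) (_ : InverseSemigroup K) (_ : InverseSemigroup T)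
        (act : T → K → K) (ε : K → T),
        IsAction act ∧ IsSurjHomOntoE ε ∧ AFR act ε ∧
        ∃ φ : S → K × T,
          Function.Injective φ ∧ Set.range φ = rsdSet ε ∧
          (∀ s s' : S, φ (s * s') = rsdMul act (φ s) (φ s')) ∧
          φ '' KerCon θ = pi2Kernel (rsdMul act) (rsdSet ε) ∧
          (∀ s s' : S, θ s s' ↔ (φ s).2 = (φ s').2) := by
  classical
  letI instT : InverseSemigroup θ.Quotient := instQ θ
  letI instK : InverseSemigroup (KS θ) := instKS θ
  have hB1 : B1Hyp ξ := hAB.2.1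
  -- abbreviations
  have hconj : ∀ (t : θ.Quotient) (x : S),
      innerBitrans ((ξ (qinv θ t)).r ((ξ t).l x))
        = ξ t * innerBitrans x * ξ (qinv θ t) := by
    intro t x; conv_rhs => rw [mul_inner, inner_mul']
  have hdom_idem : ∀ a : KS θ, ((a.1⁻¹ * a.1 : S) : θ.Quotient) = (a.1 : θ.Quotient) := by
    intro a
    have hea := (mem_ker_iff θ).mp a.2
    rw [Con.coe_mul, ← qinv_coe]
    show (a.1 : θ.Quotient)⁻¹ * (a.1 : θ.Quotient) = (a.1 : θ.Quotient)
    rw [inv_idem' hea]; exact hea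
  have hran_idem : ∀ a : KS θ, ((a.1 * a.1⁻¹ : S) : θ.Quotient) = (a.1 : θ.Quotient) := by
    intro a
    have hea := (mem_ker_iff θ).mp a.2
    rw [Con.coe_mul, ← qinv_coe]
    show (a.1 : θ.Quotient) * (a.1 : θ.Quotient)⁻¹ = (a.1 : θ.Quotient)
    rw [inv_idem' hea]; exact hea
  have hLrc : ∀ (t : θ.Quotient) (a : KS θ),
      (ξ (qinv θ t * t)).r ((ξ t).l a.1) = (ξ t).l a.1 := by
    intro t a
    have hea := (mem_ker_iff θ).mp a.2
    have hu : (qinv θ t * t) * (qinv θ t * t) = qinv θ t * t := idem_dom t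
    apply Lright' hAB hmulξ hu
    refine ⟨(a.1 : θ.Quotient), hea, ?_⟩
    calc (((((ξ t).l a.1)⁻¹ * (ξ t).l a.1 : S)) : θ.Quotient)
        = (((ξ t).l a.1 : S) : θ.Quotient)⁻¹ * (((ξ t).l a.1 : S) : θ.Quotient) := by
          rw [Con.coe_mul, ← qinv_coe]; rfl
      _ = (t * (a.1 : θ.Quotient))⁻¹ * (t * (a.1 : θ.Quotient)) := by
          rw [(hB1 t a.1).1]
      _ = (a.1 : θ.Quotient) * (t⁻¹ * t) := dom_mul_idem hea
      _ = (a.1 : θ.Quotient) * (qinv θ t * t) := rfl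
  -- IsAction
  have hAct : IsAction (actK ξ hB1) := by
    constructor
    · intro t a b
      apply Subtype.ext
      show (ξ (qinv θ t)).r ((ξ t).l (a.1 * b.1))
        = (ξ (qinv θ t)).r ((ξ t).l a.1) * (ξ (qinv θ t)).r ((ξ t).l b.1)
      apply inner_inj
      have hLHS : innerBitrans ((ξ (qinv θ t)).r ((ξ t).l (a.1 * b.1)))
          = innerBitrans ((ξ t).l a.1) * innerBitrans b.1 * ξ (qinv θ t) := by
        calc innerBitrans ((ξ (qinv θ t)).r ((ξ t).l (a.1 * b.1)))
            = ξ t * innerBitrans (a.1 * b.1) * ξ (qinv θ t) := hconj t _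
          _ = ξ t * (innerBitrans a.1 * innerBitrans b.1) * ξ (qinv θ t) := by
              rw [inner_mul]
          _ = (ξ t * innerBitrans a.1) * innerBitrans b.1 * ξ (qinv θ t) := by
              simp only [mul_assoc]
          _ = innerBitrans ((ξ t).l a.1) * innerBitrans b.1 * ξ (qinv θ t) := by
              rw [mul_inner (ξ t) a.1]
      have hRHS : innerBitrans ((ξ (qinv θ t)).r ((ξ t).l a.1)
              * (ξ (qinv θ t)).r ((ξ t).l b.1))
          = innerBitrans ((ξ t).l a.1) * innerBitrans b.1 * ξ (qinv θ t) := by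
        calc innerBitrans ((ξ (qinv θ t)).r ((ξ t).l a.1)
                * (ξ (qinv θ t)).r ((ξ t).l b.1))
            = innerBitrans ((ξ (qinv θ t)).r ((ξ t).l a.1))
                * innerBitrans ((ξ (qinv θ t)).r ((ξ t).l b.1)) := (inner_mul _ _).symm
          _ = (ξ t * innerBitrans a.1 * ξ (qinv θ t))
                * (ξ t * innerBitrans b.1 * ξ (qinv θ t)) := by rw [hconj, hconj]
          _ = (ξ t * innerBitrans a.1) * (ξ (qinv θ t) * ξ t)
                * (innerBitrans b.1 * ξ (qinv θ t)) := by simp only [mul_assoc]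
          _ = (ξ t * innerBitrans a.1) * ξ (qinv θ t * t)
                * (innerBitrans b.1 * ξ (qinv θ t)) := by rw [hmulξ]
          _ = innerBitrans ((ξ t).l a.1) * ξ (qinv θ t * t)
                * (innerBitrans b.1 * ξ (qinv θ t)) := by rw [mul_inner (ξ t) a.1]
          _ = innerBitrans ((ξ (qinv θ t * t)).r ((ξ t).l a.1))
                * (innerBitrans b.1 * ξ (qinv θ t)) := by
              rw [inner_mul' ((ξ t).l a.1) (ξ (qinv θ t * t))]
          _ = innerBitrans ((ξ t).l a.1) * (innerBitrans b.1 * ξ (qinv θ t)) := by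
              rw [hLrc]
          _ = innerBitrans ((ξ t).l a.1) * innerBitrans b.1 * ξ (qinv θ t) := by
              rw [mul_assoc]
      rw [hLHS, hRHS]
    · intro t u a
      apply Subtype.ext
      show (ξ (qinv θ (t * u))).r ((ξ (t * u)).l a.1)
        = (ξ (qinv θ t)).r ((ξ t).l ((ξ (qinv θ u)).r ((ξ u).l a.1)))
      apply inner_inj
      have hq : qinv θ (t * u) = qinv θ u * qinv θ t := mul_inv_rev' t u
      calc innerBitrans ((ξ (qinv θ (t * u))).r ((ξ (t * u)).l a.1))
          = ξ (t * u) * innerBitrans a.1 * ξ (qinv θ (t * u)) := hconj _ _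
        _ = (ξ t * ξ u) * innerBitrans a.1 * (ξ (qinv θ u) * ξ (qinv θ t)) := by
            rw [hq, hmulξ, hmulξ]
        _ = ξ t * (ξ u * innerBitrans a.1 * ξ (qinv θ u)) * ξ (qinv θ t) := by
            simp only [mul_assoc]
        _ = ξ t * innerBitrans ((ξ (qinv θ u)).r ((ξ u).l a.1)) * ξ (qinv θ t) := by
            rw [hconj]
        _ = innerBitrans ((ξ (qinv θ t)).r ((ξ t).l ((ξ (qinv θ u)).r ((ξ u).l a.1)))) :=
            (hconj _ _).symm
  -- IsSurjHomOntoE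
  have hSurj : IsSurjHomOntoE (fun a : KS θ => ((a.1 : S) : θ.Quotient)) := by
    refine ⟨fun a b => ?_, fun a => ?_, fun e he => ?_⟩
    · show ((a.1 * b.1 : S) : θ.Quotient) = _
      rw [Con.coe_mul]
    · exact (mem_ker_iff θ).mp a.2
    · induction e using Con.induction_on with | H x =>
      have hxx : θ (x * x) x := θ.eq.mp (by rw [Con.coe_mul]; exact he)
      obtain ⟨e0, he0, hxe0⟩ := lallement θ hxx
      exact ⟨⟨e0, e0, he0, θ.refl e0⟩, (θ.eq.mpr hxe0).symm⟩
  -- AFR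
  have hAFR : AFR (actK ξ hB1) (fun a : KS θ => ((a.1 : S) : θ.Quotient)) := by
    intro a e he
    have hea : ((a.1 : S) : θ.Quotient) * ((a.1 : S) : θ.Quotient)
        = ((a.1 : S) : θ.Quotient) := (mem_ker_iff θ).mp a.2
    have heinv : qinv θ e = e := inv_idem' he
    constructor
    · intro h
      have hval : (ξ (qinv θ e)).r ((ξ e).l a.1) = a.1 := congrArg Subtype.val h
      have hcl : ((a.1 : S) : θ.Quotient) = (e * (a.1 : θ.Quotient)) * e := by
        conv_lhs => rw [← hval]
        rw [(hB1 (qinv θ e) _).2, (hB1 e a.1).1, heinv]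
      have h3 : ((a.1 : S) : θ.Quotient) = e * (a.1 : θ.Quotient) := by
        conv_lhs => rw [hcl]
        calc (e * (a.1 : θ.Quotient)) * e
            = e * ((a.1 : θ.Quotient) * e) := by rw [mul_assoc]
          _ = e * (e * (a.1 : θ.Quotient)) := by erw [idem_comm hea he]; rfl
          _ = (e * e) * (a.1 : θ.Quotient) := by rw [← mul_assoc]
          _ = e * (a.1 : θ.Quotient) := by rw [he]
      refine ⟨(a.1 : θ.Quotient), hea, ?_⟩
      show ((a.1 : S) : θ.Quotient) = ((a.1 : S) : θ.Quotient) * e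
      conv_rhs => rw [h3]
      exact hcl
    · intro hle
      obtain ⟨f, hf, hfe⟩ := hle
      apply Subtype.ext
      show (ξ (qinv θ e)).r ((ξ e).l a.1) = a.1
      have hl : (ξ e).l a.1 = a.1 := by
        apply Lleft' hAB hmulξ he
        rw [hran_idem a]
        exact ⟨f, hf, hfe⟩
      rw [hl, heinv]
      apply Lright' hAB hmulξ he
      rw [hdom_idem a]
      exact ⟨f, hf, hfe⟩
  -- φ basic facts
  have hrec : ∀ x : S,
      (ξ ((x : θ.Quotient))).r ((ξ (qinv θ (x : θ.Quotient))).r x) = x := by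
    intro x
    have e1 : (ξ ((x : θ.Quotient))).r ((ξ (qinv θ (x : θ.Quotient))).r x)
        = (ξ (qinv θ (x : θ.Quotient)) * ξ ((x : θ.Quotient))).r x := rfl
    rw [e1, ← hmulξ, qinv_coe, ← Con.coe_mul]
    exact Lright hAB hmulξ x
  have hinj : Function.Injective (phiK ξ hB1) := by
    intro s s' h
    have h2 : (s : θ.Quotient) = (s' : θ.Quotient) := congrArg Prod.snd h
    have h1 : (ξ (qinv θ (s : θ.Quotient))).r s
        = (ξ (qinv θ (s' : θ.Quotient))).r s' := congrArg (fun p => (Prod.fst p).1) h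
    have h3 := hrec s
    rw [h1, h2] at h3
    rw [← h3, hrec s']
  have hrange : Set.range (phiK ξ hB1)
      = rsdSet (fun a : KS θ => ((a.1 : S) : θ.Quotient)) := by
    apply Set.eq_of_subset_of_subset
    · rintro p ⟨s, rfl⟩
      show (((ξ (qinv θ (s : θ.Quotient))).r s : S) : θ.Quotient) = iran (s : θ.Quotient)
      show _ = (s : θ.Quotient) * (s : θ.Quotient)⁻¹
      exact (hB1 _ s).2
    · rintro ⟨a, t⟩ hp
      have hp' : ((a.1 : S) : θ.Quotient) = t * t⁻¹ := hp
      refine ⟨(ξ t).r a.1, ?_⟩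
      have hsnd : (((ξ t).r a.1 : S) : θ.Quotient) = t := by
        rw [(hB1 t a.1).2, hp']; exact mim t
      have hfst : (ξ (qinv θ ((((ξ t).r a.1 : S)) : θ.Quotient))).r ((ξ t).r a.1)
          = a.1 := by
        rw [hsnd]
        have e1 : (ξ (qinv θ t)).r ((ξ t).r a.1) = (ξ t * ξ (qinv θ t)).r a.1 := rfl
        rw [e1, ← hmulξ]
        apply Lright' hAB hmulξ (idem_ran t)
        rw [hdom_idem a, hp']
        exact ⟨t * t⁻¹, idem_ran t, (idem_ran t).symm⟩
      exact Prod.ext (Subtype.ext hfst) hsnd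
  have hmulφ : ∀ s s' : S,
      phiK ξ hB1 (s * s') = rsdMul (actK ξ hB1) (phiK ξ hB1 s) (phiK ξ hB1 s') := by
    intro s s'
    apply Prod.ext
    · apply Subtype.ext
      show (ξ (qinv θ ((s * s' : S) : θ.Quotient))).r (s * s')
        = (ξ (qinv θ (s : θ.Quotient))).r s
          * (ξ (qinv θ (s : θ.Quotient))).r ((ξ ((s : θ.Quotient))).l
              ((ξ (qinv θ ((s' : S) : θ.Quotient))).r s'))
      apply inner_inj
      have hqq : qinv θ ((s * s' : S) : θ.Quotient)
          = qinv θ ((s' : S) : θ.Quotient) * qinv θ (s : θ.Quotient) := by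
        rw [qinv_coe, mul_inv_rev', Con.coe_mul, ← qinv_coe, ← qinv_coe]
      have hqs : qinv θ (s : θ.Quotient) * (s : θ.Quotient)
          = ((s⁻¹ * s : S) : θ.Quotient) := by
        rw [qinv_coe, ← Con.coe_mul]
      have hLHS : innerBitrans ((ξ (qinv θ ((s * s' : S) : θ.Quotient))).r (s * s'))
          = innerBitrans s * innerBitrans ((ξ (qinv θ ((s' : S) : θ.Quotient))).r s')
            * ξ (qinv θ (s : θ.Quotient)) := by
        calc innerBitrans ((ξ (qinv θ ((s * s' : S) : θ.Quotient))).r (s * s'))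
            = innerBitrans (s * s') * ξ (qinv θ ((s * s' : S) : θ.Quotient)) :=
              (inner_mul' _ _).symm
          _ = (innerBitrans s * innerBitrans s')
              * (ξ (qinv θ ((s' : S) : θ.Quotient)) * ξ (qinv θ (s : θ.Quotient))) := by
              rw [← inner_mul, hqq, hmulξ]
          _ = innerBitrans s * ((innerBitrans s' * ξ (qinv θ ((s' : S) : θ.Quotient)))
              * ξ (qinv θ (s : θ.Quotient))) := by simp only [mul_assoc]
          _ = innerBitrans s * (innerBitrans ((ξ (qinv θ ((s' : S) : θ.Quotient))).r s')
              * ξ (qinv θ (s : θ.Quotient))) := by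
              rw [inner_mul' s' (ξ (qinv θ ((s' : S) : θ.Quotient)))]
          _ = innerBitrans s * innerBitrans ((ξ (qinv θ ((s' : S) : θ.Quotient))).r s')
              * ξ (qinv θ (s : θ.Quotient)) := by rw [mul_assoc]
      have hRHS : innerBitrans ((ξ (qinv θ (s : θ.Quotient))).r s
            * (ξ (qinv θ (s : θ.Quotient))).r ((ξ ((s : θ.Quotient))).l
                ((ξ (qinv θ ((s' : S) : θ.Quotient))).r s')))
          = innerBitrans s * innerBitrans ((ξ (qinv θ ((s' : S) : θ.Quotient))).r s')
            * ξ (qinv θ (s : θ.Quotient)) := by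
        calc innerBitrans ((ξ (qinv θ (s : θ.Quotient))).r s
              * (ξ (qinv θ (s : θ.Quotient))).r ((ξ ((s : θ.Quotient))).l
                  ((ξ (qinv θ ((s' : S) : θ.Quotient))).r s')))
            = innerBitrans ((ξ (qinv θ (s : θ.Quotient))).r s)
              * innerBitrans ((ξ (qinv θ (s : θ.Quotient))).r ((ξ ((s : θ.Quotient))).l
                  ((ξ (qinv θ ((s' : S) : θ.Quotient))).r s'))) := (inner_mul _ _).symm
          _ = (innerBitrans s * ξ (qinv θ (s : θ.Quotient)))
              * (ξ ((s : θ.Quotient))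
                * innerBitrans ((ξ (qinv θ ((s' : S) : θ.Quotient))).r s')
                * ξ (qinv θ (s : θ.Quotient))) := by
              rw [← inner_mul' s (ξ (qinv θ (s : θ.Quotient))),
                hconj ((s : θ.Quotient)) ((ξ (qinv θ ((s' : S) : θ.Quotient))).r s')]
          _ = innerBitrans s * (ξ (qinv θ (s : θ.Quotient)) * ξ ((s : θ.Quotient)))
              * (innerBitrans ((ξ (qinv θ ((s' : S) : θ.Quotient))).r s')
                * ξ (qinv θ (s : θ.Quotient))) := by simp only [mul_assoc]
          _ = innerBitrans s * ξ ((((s⁻¹ * s : S)) : θ.Quotient))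
              * (innerBitrans ((ξ (qinv θ ((s' : S) : θ.Quotient))).r s')
                * ξ (qinv θ (s : θ.Quotient))) := by rw [← hmulξ, hqs]
          _ = innerBitrans ((ξ ((((s⁻¹ * s : S)) : θ.Quotient))).r s)
              * (innerBitrans ((ξ (qinv θ ((s' : S) : θ.Quotient))).r s')
                * ξ (qinv θ (s : θ.Quotient))) := by
              rw [inner_mul' s (ξ (((s⁻¹ * s : S)) : θ.Quotient))]
          _ = innerBitrans s
              * (innerBitrans ((ξ (qinv θ ((s' : S) : θ.Quotient))).r s')
                * ξ (qinv θ (s : θ.Quotient))) := by rw [Lright hAB hmulξ s]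
          _ = innerBitrans s * innerBitrans ((ξ (qinv θ ((s' : S) : θ.Quotient))).r s')
              * ξ (qinv θ (s : θ.Quotient)) := by rw [mul_assoc]
      rw [hLHS, hRHS]
    · show ((s * s' : S) : θ.Quotient) = (s : θ.Quotient) * (s' : θ.Quotient)
      rw [Con.coe_mul]
  have hiff : ∀ s s' : S, θ s s' ↔ (phiK ξ hB1 s).2 = (phiK ξ hB1 s').2 :=
    fun s s' => ⟨fun h => θ.eq.mpr h, fun h => θ.eq.mp h⟩
  have hker : phiK ξ hB1 '' KerCon θ
      = pi2Kernel (rsdMul (actK ξ hB1))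
          (rsdSet (fun a : KS θ => ((a.1 : S) : θ.Quotient))) := by
    apply Set.eq_of_subset_of_subset
    · rintro p ⟨s, hs, rfl⟩
      obtain ⟨e, he, hse⟩ := hs
      refine ⟨by rw [← hrange]; exact ⟨s, rfl⟩, phiK ξ hB1 e, ?_, ?_, ?_⟩
      · rw [← hrange]; exact ⟨e, rfl⟩
      · rw [← hmulφ, he]
      · show ((e : S) : θ.Quotient) = (s : θ.Quotient)
        exact (θ.eq.mpr hse).symm
    · rintro p ⟨hp, q, hq, hqq, hq2⟩
      rw [← hrange] at hp hq
      obtain ⟨s, rfl⟩ := hp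
      obtain ⟨s', rfl⟩ := hq
      have hs2 : s' * s' = s' := hinj (by rw [hmulφ]; exact hqq)
      have hθ : θ s s' := θ.eq.mp (hq2 : ((s' : S) : θ.Quotient) = (s : θ.Quotient)).symm
      exact ⟨s, ⟨s', hs2, hθ⟩, rfl⟩
  exact ⟨KS θ, θ.Quotient, instK, instT, actK ξ hB1,
    fun a : KS θ => ((a.1 : S) : θ.Quotient), hAct, hSurj, hAFR,
    phiK ξ hB1, hinj, hrange, hmulφ, hker, hiff⟩
section InvMore3
variable {M : Type*} [InverseSemigroup M]

lemma iran_idem (x : M) : iran x * iran x = iran x := idem_ran x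

lemma iran_mul_self (x : M) : iran x * x = x := mim x

lemma iran_absorb_left (u z : M) : iran (u * z) * u = u * iran z := by
  show (u * z) * (u * z)⁻¹ * u = u * (z * z⁻¹)
  rw [mul_inv_rev']
  calc (u * z) * (z⁻¹ * u⁻¹) * u
      = u * ((z * z⁻¹) * (u⁻¹ * u)) := by simp only [mul_assoc]
    _ = u * ((u⁻¹ * u) * (z * z⁻¹)) := by rw [idem_comm (idem_ran z) (idem_dom u)]
    _ = (u * (u⁻¹ * u)) * (z * z⁻¹) := by simp only [mul_assoc]
    _ = u * (z * z⁻¹) := by rw [mim']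

lemma iran_mul_absorb (z y : M) : iran (z * y) * iran z = iran (z * y) := by
  show (z * y) * (z * y)⁻¹ * (z * z⁻¹) = (z * y) * (z * y)⁻¹
  rw [mul_inv_rev']
  calc (z * y) * (y⁻¹ * z⁻¹) * (z * z⁻¹)
      = z * (y * (y⁻¹ * (z⁻¹ * (z * z⁻¹)))) := by simp only [mul_assoc]
    _ = z * (y * (y⁻¹ * z⁻¹)) := by rw [imi']
    _ = (z * y) * (y⁻¹ * z⁻¹) := by simp only [mul_assoc]

lemma iran_absorb_conj (u z : M) : iran (u * z) * (u * iran z) = u * iran z := by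
  calc iran (u * z) * (u * iran z)
      = (iran (u * z) * u) * iran z := by rw [mul_assoc]
    _ = (u * iran z) * iran z := by rw [iran_absorb_left]
    _ = u * (iran z * iran z) := by rw [mul_assoc]
    _ = u * iran z := by rw [iran_idem]

end InvMore3

lemma forward_constr {S : Type v} [InverseSemigroup S] (θ : Con S)
    (h : ∃ (K T : Type v) (_ : InverseSemigroup K) (_ : InverseSemigroup T)
        (act : T → K → K) (ε : K → T),
        IsAction act ∧ IsSurjHomOntoE ε ∧ AFR act ε ∧
        ∃ φ : S → K × T,
          Function.Injective φ ∧ Set.range φ = rsdSet ε ∧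
          (∀ s s' : S, φ (s * s') = rsdMul act (φ s) (φ s')) ∧
          φ '' KerCon θ = pi2Kernel (rsdMul act) (rsdSet ε) ∧
          (∀ s s' : S, θ s s' ↔ (φ s).2 = (φ s').2)) :
    ∃ ξ : θ.Quotient → Bitrans S, IsAlmostBillhardt θ ξ ∧
        ∀ t u : θ.Quotient, ξ (t * u) = ξ t * ξ u := by
  classical
  obtain ⟨K, T, iK, iT, act, ε, ⟨hact1, hact2⟩, ⟨hεm, hεi, hεs⟩, hafr,
    φ, hinj, hrange, hmul, hker, hθiff⟩ := h
  letI instT : InverseSemigroup θ.Quotient := instQ θ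
  -- the isomorphism τ between the quotient and T
  let τ : θ.Quotient → T := fun x =>
    Con.liftOn x (fun s => (φ s).2) (fun s s' hss' => (hθiff s s').mp hss')
  have hτ : ∀ s : S, τ (s : θ.Quotient) = (φ s).2 := fun _ => rfl
  have hτmul : ∀ x y : θ.Quotient, τ (x * y) = τ x * τ y := by
    intro x y
    induction x using Con.induction_on with | H s =>
    induction y using Con.induction_on with | H s' =>
    show τ ((s : θ.Quotient) * (s' : θ.Quotient)) = (φ s).2 * (φ s').2
    rw [← Con.coe_mul, hτ, hmul]
    rfl
  have hτinj : Function.Injective τ := by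
    intro x y hxy
    induction x using Con.induction_on with | H s =>
    induction y using Con.induction_on with | H s' =>
    exact θ.eq.mpr ((hθiff s s').mpr hxy)
  have hφmem : ∀ s : S, φ s ∈ rsdSet ε := fun s => hrange ▸ ⟨s, rfl⟩
  have hclosed : ∀ p q : K × T, p ∈ rsdSet ε → q ∈ rsdSet ε →
      rsdMul act p q ∈ rsdSet ε := by
    intro p q hp hq
    rw [← hrange] at hp hq ⊢
    obtain ⟨s, rfl⟩ := hp
    obtain ⟨s', rfl⟩ := hq
    exact ⟨s * s', hmul s s'⟩
  have hiranE : ∀ e : T, e * e = e → iran e = e := by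
    intro e he
    show e * e⁻¹ = e
    rw [inv_idem' he]; exact he
  -- equivariance of ε
  have hequiv : ∀ (t : T) (b : K), ε (act t b) = t * ε b * t⁻¹ := by
    intro t b
    obtain ⟨a, ha⟩ := hεs (t * t⁻¹) (idem_ran t)
    have hp : (a, t) ∈ rsdSet ε := by
      show ε a = iran t; rw [ha]; rfl
    have hq : (b, ε b) ∈ rsdSet ε := by
      show ε b = iran (ε b); rw [hiranE _ (hεi b)]
    have hc : ε (a * act t b) = iran (t * ε b) := hclosed _ _ hp hq
    have hc2 : (t * t⁻¹) * ε (act t b) = iran (t * ε b) := by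
      rw [← ha, ← hεm]; exact hc
    have hir : iran (t * ε b) = t * ε b * t⁻¹ := by
      show (t * ε b) * (t * ε b)⁻¹ = _
      rw [mul_inv_rev', inv_idem' (hεi b)]
      calc (t * ε b) * (ε b * t⁻¹) = t * ((ε b * ε b) * t⁻¹) := by
            simp only [mul_assoc]
        _ = t * (ε b * t⁻¹) := by rw [hεi b]
        _ = t * ε b * t⁻¹ := by rw [← mul_assoc]
    have h3 : act (t * t⁻¹) (act t b) = act t b := by
      rw [← hact2, mim]
    obtain ⟨f, hf, hfe⟩ := (hafr (act t b) (t * t⁻¹) (idem_ran t)).mp h3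
    have h5 : (t * t⁻¹) * ε (act t b) = ε (act t b) := by
      rw [hfe]
      calc (t * t⁻¹) * (f * (t * t⁻¹))
          = ((t * t⁻¹) * f) * (t * t⁻¹) := by rw [← mul_assoc]
        _ = (f * (t * t⁻¹)) * (t * t⁻¹) := by rw [idem_comm (idem_ran t) hf]
        _ = f * ((t * t⁻¹) * (t * t⁻¹)) := by rw [mul_assoc]
        _ = f * (t * t⁻¹) := by rw [idem_ran]
    rw [← h5, hc2, hir]
  -- the virtual left and right translations stay in the product
  have hLmem : ∀ (t : T) (p : K × T), p ∈ rsdSet ε →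
      (act t p.1, t * p.2) ∈ rsdSet ε := by
    intro t p hp
    show ε (act t p.1) = iran (t * p.2)
    rw [hequiv, hp]
    show t * (p.2 * p.2⁻¹) * t⁻¹ = (t * p.2) * (t * p.2)⁻¹
    rw [mul_inv_rev']
    simp only [mul_assoc]
  have hRmem : ∀ (t : T) (p : K × T), p ∈ rsdSet ε →
      (act (iran (p.2 * t)) p.1, p.2 * t) ∈ rsdSet ε := by
    intro t p hp
    show ε (act (iran (p.2 * t)) p.1) = iran (p.2 * t)
    rw [hequiv, hp]
    have hw : iran (p.2 * t) * iran (p.2 * t) = iran (p.2 * t) := iran_idem _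
    rw [inv_idem' hw]
    have h1 : iran p.2 * iran (p.2 * t) = iran (p.2 * t) := by
      have := iran_absorb_left p.2 t
      calc iran p.2 * iran (p.2 * t)
          = iran p.2 * ((p.2 * t) * (p.2 * t)⁻¹) := rfl
        _ = (iran p.2 * (p.2 * t)) * (p.2 * t)⁻¹ := by rw [← mul_assoc]
      -- iran p.2 * (p.2 * t) = p.2 * t
        _ = ((iran p.2 * p.2) * t) * (p.2 * t)⁻¹ := by rw [← mul_assoc]
        _ = (p.2 * t) * (p.2 * t)⁻¹ := by rw [iran_mul_self]
        _ = iran (p.2 * t) := rfl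
    calc iran (p.2 * t) * iran p.2 * iran (p.2 * t)
        = (iran p.2 * iran (p.2 * t)) * iran (p.2 * t) := by
          rw [idem_comm hw (iran_idem p.2)]
      _ = iran (p.2 * t) * iran (p.2 * t) := by rw [h1]
      _ = iran (p.2 * t) := hw
  -- the choice-based sections
  have hψex : ∀ p : K × T, p ∈ rsdSet ε → ∃ s : S, φ s = p := by
    intro p hp; rw [← hrange] at hp; exact hp
  let F : T → S → S := fun t s =>
    Classical.choose (hψex _ (hLmem t (φ s) (hφmem s)))
  have hF : ∀ (t : T) (s : S), φ (F t s) = (act t (φ s).1, t * (φ s).2) :=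
    fun t s => Classical.choose_spec (hψex _ (hLmem t (φ s) (hφmem s)))
  let G : T → S → S := fun t s =>
    Classical.choose (hψex _ (hRmem t (φ s) (hφmem s)))
  have hG : ∀ (t : T) (s : S),
      φ (G t s) = (act (iran ((φ s).2 * t)) (φ s).1, (φ s).2 * t) :=
    fun t s => Classical.choose_spec (hψex _ (hRmem t (φ s) (hφmem s)))
  -- absorption
  have hF2 : ∀ (a c : K) (w : T), w * w = w →
      a * act w c = act w a * act w c := by
    intro a c w hw
    have h1 : act w (act w c) = act w c := by rw [← hact2, hw]
    obtain ⟨f, hf, hfe⟩ := (hafr (act w c) w hw).mp h1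
    have h3 : nle (ε (a * act w c)) w :=
      ⟨ε a * f, idem_mul (hεi a) hf, by rw [hεm, hfe, ← mul_assoc]⟩
    have h4 : act w (a * act w c) = a * act w c := (hafr _ w hw).mpr h3
    calc a * act w c = act w (a * act w c) := h4.symm
      _ = act w a * act w (act w c) := hact1 _ _ _
      _ = act w a * act w c := by rw [h1]
  have habs2 : ∀ (a c : K) (w : T), w * w = w → act w c = c →
      a * c = act w a * c := by
    intro a c w hw hc
    conv_lhs => rw [← hc]
    rw [hF2 a c w hw, hc]
  -- bitranslation laws
  have hlm : ∀ (t : T) (s s' : S), F t (s * s') = F t s * s' := by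
    intro t s s'
    apply hinj
    rw [hmul, hF, hmul, hF]
    show (act t ((φ s).1 * act (φ s).2 (φ s').1), t * ((φ s).2 * (φ s').2))
      = (act t (φ s).1 * act (t * (φ s).2) (φ s').1, (t * (φ s).2) * (φ s').2)
    refine Prod.ext ?_ (by rw [mul_assoc])
    show act t ((φ s).1 * act (φ s).2 (φ s').1) = _
    rw [hact1, ← hact2]
  have hrm : ∀ (t : T) (s s' : S), G t (s * s') = s * G t s' := by
    intro t s s'
    apply hinj
    rw [hmul, hG, hmul, hG]
    show (act (iran ((rsdMul act (φ s) (φ s')).2 * t)) (rsdMul act (φ s) (φ s')).1,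
        (rsdMul act (φ s) (φ s')).2 * t)
      = ((φ s).1 * act (φ s).2 (act (iran ((φ s').2 * t)) (φ s').1),
        (φ s).2 * ((φ s').2 * t))
    have h2nd : ((φ s).2 * (φ s').2) * t = (φ s).2 * ((φ s').2 * t) := mul_assoc _ _ _
    refine Prod.ext ?_ h2nd
    show act (iran (((φ s).2 * (φ s').2) * t)) ((φ s).1 * act (φ s).2 (φ s').1)
      = (φ s).1 * act (φ s).2 (act (iran ((φ s').2 * t)) (φ s').1)
    set u := (φ s).2
    set v := (φ s').2
    set a := (φ s).1
    set b := (φ s').1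
    have hw : iran ((u * v) * t) = iran (u * (v * t)) := by rw [mul_assoc]
    have hwu : iran (u * (v * t)) * u = u * iran (v * t) := iran_absorb_left u (v * t)
    have hcw : act (iran (u * (v * t))) (act (u * iran (v * t)) b)
        = act (u * iran (v * t)) b := by
      rw [← hact2, iran_absorb_conj]
    calc act (iran ((u * v) * t)) (a * act u b)
        = act (iran (u * (v * t))) a * act (iran (u * (v * t))) (act u b) := by
          rw [hw, hact1]
      _ = act (iran (u * (v * t))) a * act (iran (u * (v * t)) * u) b := by
          rw [← hact2]
      _ = act (iran (u * (v * t))) a * act (u * iran (v * t)) b := by rw [hwu]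
      _ = a * act (u * iran (v * t)) b := by
          rw [← habs2 a _ _ (iran_idem (u * (v * t))) hcw]
      _ = a * act u (act (iran (v * t)) b) := by rw [hact2]
  have hlink : ∀ (t : T) (s s' : S), s * F t s' = G t s * s' := by
    intro t s s'
    apply hinj
    rw [hmul, hF, hmul, hG]
    show ((φ s).1 * act (φ s).2 (act t (φ s').1), (φ s).2 * (t * (φ s').2))
      = (act (iran ((φ s).2 * t)) (φ s).1 * act ((φ s).2 * t) (φ s').1,
        ((φ s).2 * t) * (φ s').2)
    refine Prod.ext ?_ (by rw [mul_assoc])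
    set u := (φ s).2
    set a := (φ s).1
    set b := (φ s').1
    show a * act u (act t b) = act (iran (u * t)) a * act (u * t) b
    have hcw : act (iran (u * t)) (act (u * t) b) = act (u * t) b := by
      rw [← hact2, iran_mul_self]
    rw [← hact2]
    exact habs2 a _ _ (iran_idem (u * t)) hcw
  -- definition of ξ
  let xi : θ.Quotient → Bitrans S := fun t0 =>
    ⟨F (τ t0), G (τ t0), hlm (τ t0), hrm (τ t0), hlink (τ t0)⟩
  have hxmul : ∀ t u : θ.Quotient, xi (t * u) = xi t * xi u := by
    intro t u
    ext x
    · show F (τ (t * u)) x = F (τ t) (F (τ u) x)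
      apply hinj
      rw [hF, hF, hF, hτmul]
      refine Prod.ext ?_ (by rw [mul_assoc])
      show act (τ t * τ u) (φ x).1 = act (τ t) (act (τ u) (φ x).1)
      exact hact2 _ _ _
    · show G (τ (t * u)) x = G (τ u) (G (τ t) x)
      apply hinj
      rw [hG, hG, hG, hτmul]
      refine Prod.ext ?_ (by rw [mul_assoc])
      show act (iran ((φ x).2 * (τ t * τ u))) (φ x).1
        = act (iran (((φ x).2 * τ t) * τ u)) (act (iran ((φ x).2 * τ t)) (φ x).1)
      rw [← hact2, iran_mul_absorb, mul_assoc]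
  have hinvξ : ∀ t : θ.Quotient, IsInvPair (xi t) (xi (qinv θ t)) := by
    intro t
    constructor
    · rw [← hxmul, ← hxmul]
      congr 1
      exact mim t
    · rw [← hxmul, ← hxmul]
      congr 1
      exact imi t
  have hGfix : ∀ x : S, x * x = x → (xi ((x : θ.Quotient))).r x = x := by
    intro x hx
    show G (τ ((x : θ.Quotient))) x = x
    apply hinj
    rw [hG]
    have hQx : ((x : θ.Quotient)) * ((x : θ.Quotient)) = ((x : θ.Quotient)) := by
      rw [← Con.coe_mul, hx]
    have hDD : (φ x).2 * (φ x).2 = (φ x).2 := by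
      have h0 := congrArg τ hQx
      rw [hτmul, hτ] at h0
      exact h0
    have hsnd : (φ x).2 * τ ((x : θ.Quotient)) = (φ x).2 := by
      rw [hτ]; exact hDD
    have hεx : ε (φ x).1 = (φ x).2 := by
      rw [hφmem x]; exact hiranE _ hDD
    refine Prod.ext ?_ hsnd
    show act (iran ((φ x).2 * τ ((x : θ.Quotient)))) (φ x).1 = (φ x).1
    rw [hsnd, hiranE _ hDD]
    exact (hafr (φ x).1 (φ x).2 hDD).mpr ⟨(φ x).2, hDD, by rw [hεx, hDD]⟩
  refine ⟨xi, ⟨?_, ?_, ?_⟩, hxmul⟩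
  · -- RespectsCon
    intro t0 a b hab
    constructor
    · apply (hθiff _ _).mpr
      show (φ (F (τ t0) a)).2 = (φ (F (τ t0) b)).2
      rw [hF, hF]
      show τ t0 * (φ a).2 = τ t0 * (φ b).2
      rw [(hθiff a b).mp hab]
    · apply (hθiff _ _).mpr
      show (φ (G (τ t0) a)).2 = (φ (G (τ t0) b)).2
      rw [hG, hG]
      show (φ a).2 * τ t0 = (φ b).2 * τ t0
      rw [(hθiff a b).mp hab]
  · -- B1
    intro t0 s
    constructor
    · apply hτinj
      show τ ((F (τ t0) s : S) : θ.Quotient) = τ (t0 * (s : θ.Quotient))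
      rw [hτ, hF, hτmul, hτ]
    · apply hτinj
      show τ ((G (τ t0) s : S) : θ.Quotient) = τ ((s : θ.Quotient) * t0)
      rw [hτ, hG, hτmul, hτ]
  · -- B2
    intro om homSbar hnr t0 hcls ξi ωi hξi hωi
    -- Sbar is contained in the inner translations together with the range of ξ
    have hgen : SbarGen θ xi ⊆ (innerSet S ∪ Set.range xi : Set (Bitrans S)) := by
      rintro ω (h | ⟨t, hp⟩)
      · exact h
      · refine Or.inr ⟨qinv θ t, ?_⟩
        rw [invPair_bstar_unique (hinvξ t)]
        exact (invPair_bstar_unique hp).symm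
    have hU : om ∈ (innerSet S ∪ Set.range xi : Set (Bitrans S)) := by
      have hsub : Sbar θ xi ≤
          { carrier := innerSet S ∪ Set.range xi
            mul_mem' := by
              rintro a b (⟨x, rfl⟩ | ⟨tx, rfl⟩) (⟨y, rfl⟩ | ⟨ty, rfl⟩)
              · exact Or.inl ⟨x * y, (inner_mul x y).symm⟩
              · exact Or.inl ⟨(xi ty).r x, (inner_mul' x (xi ty)).symm⟩
              · exact Or.inl ⟨(xi tx).l y, (mul_inner (xi tx) y).symm⟩
              · exact Or.inr ⟨tx * ty, hxmul tx ty⟩ } :=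
        Subsemigroup.closure_le.mpr hgen
      exact hsub homSbar
    rcases hU with hin | hrn
    swap
    · exact absurd hrn hnr
    obtain ⟨p, hp⟩ := hin
    have ht0 : t0 = (p : θ.Quotient) := by
      apply right_cancel_all (fun y => ?_)
      induction y using Con.induction_on with | H z =>
      have h1 := (hcls z).1
      rw [← hp] at h1
      rw [inner_l, Con.coe_mul] at h1
      exact h1.symm
    have hωi' : ωi = innerBitrans p⁻¹ := by
      rw [← hp] at hωi
      rw [invPair_bstar_unique hωi, bstar_inner]
    have hξi' : ξi = xi (qinv θ t0) :=
      (invPair_bstar_unique hξi).trans (invPair_bstar_unique (hinvξ t0)).symm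
    have hd : qinv θ t0 * t0 = ((p⁻¹ * p : S) : θ.Quotient) := by
      rw [ht0, qinv_coe, ← Con.coe_mul]
    rw [hωi', ← hp, hξi', ← hxmul, hd, inner_mul]
    refine ⟨innerBitrans (p⁻¹ * p), ⟨?_, ?_⟩, ?_, ?_⟩
    · intro a b hab
      exact ⟨θ.mul (θ.refl (p⁻¹ * p)) hab, θ.mul hab (θ.refl (p⁻¹ * p))⟩
    · refine ⟨((p⁻¹ * p : S) : θ.Quotient), fun s => ⟨?_, ?_⟩⟩
      · show (((p⁻¹ * p) * s : S) : θ.Quotient) = _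
        rw [Con.coe_mul]
      · show ((s * (p⁻¹ * p) : S) : θ.Quotient) = _
        rw [Con.coe_mul]
    · rw [inner_mul, idem_dom]
    · rw [inner_mul']
      congr 1
      exact (hGfix (p⁻¹ * p) (idem_dom p)).symm
universe u

/-- A normal extension `(S, θ)` is isomorphic, as a normal
extension, to a full restricted semidirect product iff `θ` is a split almost
Billhardt congruence on `S`: there exist inverse semigroups `K`, `T`, an
action of `T` on `K` by endomorphisms satisfying (AFR), and an isomorphism
`φ : S → K ⋊ T` with `φ(Ker θ) = Ker(ker π₂)` and
`s θ s' ⇔ φ(s) (ker π₂) φ(s')`, iff there exists a homomorphism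
`ξ : S/θ → Ω(S,θ)` which is an almost Billhardt transversal to `θ`. -/
theorem iso_rsd_iff_split_almost_billhardt {S : Type u}
    [InverseSemigroup S] (θ : Con S) :
    (∃ (K T : Type u) (_ : InverseSemigroup K) (_ : InverseSemigroup T)
        (act : T → K → K) (ε : K → T),
        IsAction act ∧ IsSurjHomOntoE ε ∧ AFR act ε ∧
        ∃ φ : S → K × T,
          Function.Injective φ ∧ Set.range φ = rsdSet ε ∧
          (∀ s s' : S, φ (s * s') = rsdMul act (φ s) (φ s')) ∧
          φ '' KerCon θ = pi2Kernel (rsdMul act) (rsdSet ε) ∧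
          (∀ s s' : S, θ s s' ↔ (φ s).2 = (φ s').2)) ↔
    (∃ ξ : θ.Quotient → Bitrans S, IsAlmostBillhardt θ ξ ∧
        ∀ t u : θ.Quotient, ξ (t * u) = ξ t * ξ u) := by
  constructor
  · exact fun h => forward_constr θ h
  · rintro ⟨ξ, hAB, hmul⟩
    exact backward_constr θ ξ hAB hmul
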